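/- arXiv:1407.4562 — 8 statements merged into one kernel-verified Lean document; each statement's English description precedes it below -/
import Mathlib

section
/- Define G_i^{(k)}(x) = (F_{i+1}^{(k)}(x) - (k-1)·F_i^{(k)}(x))/(x-k) for i≥1 and G_0^{(k)}(x)=1. Then G_i^{(k)}(x) = Σ_{j=0}^{i} F_j^{(k)}(x) for all i≥0. -/
open Polynomial

noncomputable def treeF (k : ℝ) : ℕ → Polynomial ℝ
  | 0 => 1
  | 1 => X
  | 2 => X ^ 2 - C k
  | (n + 3) => X * treeF k (n + 2) - C (k - 1) * treeF k (n + 1)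

/-! The sums `∑_{j ≤ i} F_j` telescope: `D_i := F_{i+1} - (k-1) F_i` satisfies
`D_{i+1} - D_i = (X - k) F_{i+1}` by the three-term recurrence, and `D_1 = (X - k)(F_0 + F_1)`. -/

lemma treeF_add_three (k : ℝ) (n : ℕ) :
    treeF k (n + 3) = X * treeF k (n + 2) - C (k - 1) * treeF k (n + 1) := rfl

lemma treeF_two_sub_mul_treeF_one (k : ℝ) :
    treeF k 2 - C (k - 1) * treeF k 1 = (X - C k) * (treeF k 0 + treeF k 1) := by
  simp only [treeF, map_sub, map_one]
  ring

lemma treeF_sub_mul_treeF_succ_sub (k : ℝ) (n : ℕ) :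
    (treeF k (n + 3) - C (k - 1) * treeF k (n + 2)) -
        (treeF k (n + 2) - C (k - 1) * treeF k (n + 1)) =
      (X - C k) * treeF k (n + 2) := by
  rw [treeF_add_three, map_sub, map_one]
  ring

theorem X_sub_C_mul_sum_treeF (k : ℝ) {i : ℕ} (hi : 1 ≤ i) :
    (X - C k) * ∑ j ∈ Finset.range (i + 1), treeF k j =
      treeF k (i + 1) - C (k - 1) * treeF k i := by
  induction i, hi using Nat.le_induction with
  | base =>
    rw [Finset.sum_range_succ, Finset.sum_range_one, treeF_two_sub_mul_treeF_one]
  | succ n hn ih =>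
    obtain ⟨m, rfl⟩ := Nat.exists_eq_add_of_le' hn
    rw [Finset.sum_range_succ, mul_add, ih, ← treeF_sub_mul_treeF_succ_sub]
    ring

theorem treeG_eq_sum_general (k : ℕ) (i : ℕ) (hi : 1 ≤ i) :
    (X - C (k : ℝ)) * ∑ j ∈ Finset.range (i + 1), treeF (k : ℝ) j =
      treeF (k : ℝ) (i + 1) - C ((k : ℝ) - 1) * treeF (k : ℝ) i :=
  X_sub_C_mul_sum_treeF (k : ℝ) hi

theorem treeG_eq_sum (k : ℕ) (hk : 2 ≤ k) (i : ℕ) (hi : 1 ≤ i) :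
    (X - C (k : ℝ)) * ∑ j ∈ Finset.range (i + 1), treeF (k : ℝ) j =
      treeF (k : ℝ) (i + 1) - C ((k : ℝ) - 1) * treeF (k : ℝ) i :=
  treeG_eq_sum_general k i hi
end

section
/- The polynomials F_i^{(k)} are orthogonal with respect to the weight w(x)=√(4(k-1)-x²)/(k²-x²) on the interval [-2√(k-1), 2√(k-1)]: for i≠j, ∫_{-2√(k-1)}^{2√(k-1)} F_i^{(k)}(x)·F_j^{(k)}(x)·w(x) dx = 0. -/
/-!
Put q = √(k - 1) and substitute x = 2q cos θ. The weighted measure becomes ω(θ) dθ on [0, π] with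
ω(θ) = (2q sin θ)² / ((q² + 1)² - (2q cos θ)²) ∈ [0, 1], so L p = ∫₀^π p(2q cos θ) ω(θ) dθ is a
linear functional on ℝ[X]. Because the F_n obey a three-term recurrence
x F_n = F_{n+1} + c_n F_{n-1} with F_0 = 1, and multiplication by x is symmetric for
(f, g) ↦ L (f g), orthogonality follows from L F_n = 0 for n ≥ 1.

For n ≥ 1, F_n(2q cos θ) ω(θ) = 2qⁿ (cos nθ - (q² - 1) Re(e^{inθ} / (q² - e^{2iθ}))).
The cosine integrates to zero over [0, π]; for q > 1 the integrals K_n of the second term satisfy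
K_{n+2} = q² K_n and are bounded, so they vanish as well.
-/

open Polynomial

open Real Set MeasureTheory intervalIntegral

theorem map_mul_eq_zero_of_threeTermRecurrence {R M : Type*} [CommRing R] [AddCommGroup M]
    [Module R M] (L : R[X] →ₗ[R] M) {p : ℕ → R[X]} {c : ℕ → R}
    (h0 : p 0 = 1) (h1 : p 1 = X) (hrec : ∀ n, X * p (n + 1) = p (n + 2) + C (c n) * p n)
    (hL : ∀ n, n ≠ 0 → L (p n) = 0) {m n : ℕ} (hmn : m ≠ n) : L (p m * p n) = 0 := by
  wlog hlt : m < n generalizing m n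
  · rw [mul_comm]
    exact this hmn.symm (by omega)
  clear hmn
  obtain ⟨n, rfl⟩ : ∃ n', n = n' + 1 := ⟨n - 1, by omega⟩
  induction m using Nat.twoStepInduction generalizing n with
  | zero => simpa [h0] using hL (n + 1) n.succ_ne_zero
  | one =>
    rw [h1, hrec, map_add, C_mul', map_smul, hL _ (by omega), hL _ (by omega), smul_zero, add_zero]
  | more j ih0 ih1 =>
    have hj : p (j + 2) = X * p (j + 1) - C (c j) * p j := eq_sub_of_add_eq (hrec j).symm
    have expand : p (j + 2) * p (n + 1)
        = p (j + 1) * p (n + 2) + c n • (p (j + 1) * p n) - c j • (p j * p (n + 1)) := by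
      rw [hj, ← C_mul', ← C_mul', sub_mul, mul_assoc, mul_left_comm, hrec]
      ring
    obtain ⟨n', rfl⟩ : ∃ n', n = n' + 1 := ⟨n - 1, by omega⟩
    rw [expand, map_sub, map_add, map_smul, map_smul, ih1 _ (by omega), ih1 _ (by omega),
      ih0 _ (by omega), smul_zero, smul_zero, add_zero, sub_zero]

theorem eq_zero_of_bounded_of_succ_eq_mul {a : ℕ → ℝ} {r B : ℝ} (hr : 1 < r)
    (ha : ∀ m, a (m + 1) = r * a m) (hB : ∀ m, |a m| ≤ B) : a 0 = 0 := by
  have hpow : ∀ m, a m = r ^ m * a 0 := fun m => by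
    induction m with
    | zero => simp
    | succ m ih => rw [ha, ih, pow_succ]; ring
  by_contra h0
  obtain ⟨m, hm⟩ := pow_unbounded_of_one_lt (B / |a 0|) hr
  have := hB m
  rw [hpow, abs_mul, abs_of_pos (by positivity : 0 < r ^ m)] at this
  rw [div_lt_iff₀ (abs_pos.mpr h0)] at hm
  linarith

theorem integral_cos_nat_mul_eq_zero {n : ℕ} (hn : n ≠ 0) :
    ∫ θ in (0 : ℝ)..π, cos (n * θ) = 0 := by
  rw [integral_comp_mul_left (fun x => cos x) (Nat.cast_ne_zero.mpr hn), integral_cos,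
    sin_nat_mul_pi]
  simp

theorem cos_add_mul_add_cos_sub_mul (a b θ : ℝ) :
    cos ((a + b) * θ) + cos ((a - b) * θ) = 2 * cos (a * θ) * cos (b * θ) := by
  rw [add_mul, sub_mul, cos_add, cos_sub]
  ring

theorem integral_neg_self_eq_integral_sin_mul_comp_cos {c : ℝ} (hc : 0 < c) (g : ℝ → ℝ) :
    ∫ x in -c..c, g x = ∫ θ in (0 : ℝ)..π, c * sin θ * g (c * cos θ) := by
  have himage : (fun θ => c * cos θ) '' Icc 0 π = Icc (-c) c := by
    rw [← image_image (c * ·) cos, bijOn_cos.image_eq, image_mul_left_Icc' hc, mul_neg_one,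
      mul_one]
  rw [integral_of_le (by linarith), integral_of_le pi_pos.le, ← integral_Icc_eq_integral_Ioc,
    ← integral_Icc_eq_integral_Ioc, ← himage,
    integral_image_eq_integral_abs_deriv_smul measurableSet_Icc
      (fun θ _ => ((hasDerivAt_cos θ).const_mul c).hasDerivWithinAt)
      (fun a ha b hb hab => injOn_cos ha hb (mul_left_cancel₀ hc.ne' hab)) g]
  refine setIntegral_congr_fun measurableSet_Icc fun θ hθ => ?_
  rw [smul_eq_mul, abs_mul, abs_neg, abs_of_pos hc,
    abs_of_nonneg (sin_nonneg_of_nonneg_of_le_pi hθ.1 hθ.2)]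

theorem sq_add_one_sq_sub_two_mul_cos_sq (q θ : ℝ) :
    (q ^ 2 + 1) ^ 2 - (2 * q * cos θ) ^ 2 = (q ^ 2 - 1) ^ 2 + (2 * q * sin θ) ^ 2 := by
  linear_combination (-4 * q ^ 2) * sin_sq_add_cos_sq θ

noncomputable def kestenMcKayWeight (q θ : ℝ) : ℝ :=
  (2 * q * sin θ) ^ 2 / ((q ^ 2 + 1) ^ 2 - (2 * q * cos θ) ^ 2)

theorem kestenMcKayWeight_nonneg (q θ : ℝ) : 0 ≤ kestenMcKayWeight q θ := by
  unfold kestenMcKayWeight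
  rw [sq_add_one_sq_sub_two_mul_cos_sq]
  positivity

theorem kestenMcKayWeight_le_one (q θ : ℝ) : kestenMcKayWeight q θ ≤ 1 := by
  unfold kestenMcKayWeight
  rw [sq_add_one_sq_sub_two_mul_cos_sq]
  exact div_le_one_of_le₀ (le_add_of_nonneg_left (sq_nonneg _)) (by positivity)

theorem intervalIntegrable_kestenMcKayWeight (q : ℝ) :
    IntervalIntegrable (kestenMcKayWeight q) volume 0 π := by
  refine (intervalIntegrable_const (c := (1 : ℝ))).mono_fun ?_ ?_
  · exact Measurable.aestronglyMeasurable (by unfold kestenMcKayWeight; fun_prop)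
  · refine Filter.Eventually.of_forall fun θ => ?_
    simp [abs_of_nonneg (kestenMcKayWeight_nonneg q θ), kestenMcKayWeight_le_one]

theorem intervalIntegrable_eval_mul_kestenMcKayWeight (q : ℝ) (p : ℝ[X]) :
    IntervalIntegrable (fun θ => p.eval (2 * q * cos θ) * kestenMcKayWeight q θ) volume 0 π :=
  (intervalIntegrable_kestenMcKayWeight q).continuousOn_mul (by fun_prop)

noncomputable def kestenMcKayFunctional (q : ℝ) : ℝ[X] →ₗ[ℝ] ℝ where
  toFun p := ∫ θ in (0 : ℝ)..π, p.eval (2 * q * cos θ) * kestenMcKayWeight q θ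
  map_add' p r := by
    simp only [eval_add, add_mul]
    exact integral_add (intervalIntegrable_eval_mul_kestenMcKayWeight q p)
      (intervalIntegrable_eval_mul_kestenMcKayWeight q r)
  map_smul' a p := by
    simp only [eval_smul, smul_eq_mul, RingHom.id_apply, ← intervalIntegral.integral_const_mul]
    exact integral_congr fun θ _ => mul_assoc _ _ _

theorem kestenMcKayFunctional_apply (q : ℝ) (p : ℝ[X]) :
    kestenMcKayFunctional q p =
      ∫ θ in (0 : ℝ)..π, p.eval (2 * q * cos θ) * kestenMcKayWeight q θ :=
  rfl

-- `kernelRe q n θ = Re (e^{inθ} / (q² - e^{2iθ}))`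
noncomputable def kernelRe (q : ℝ) (n : ℕ) (θ : ℝ) : ℝ :=
  (q ^ 2 * cos (n * θ) - cos ((n - 2) * θ)) / ((q ^ 2 + 1) ^ 2 - (2 * q * cos θ) ^ 2)

theorem kernelRe_recurrence {q θ : ℝ} (hD : (q ^ 2 + 1) ^ 2 - (2 * q * cos θ) ^ 2 ≠ 0) (n : ℕ) :
    q ^ 2 * kernelRe q n θ - kernelRe q (n + 2) θ = cos (n * θ) := by
  unfold kernelRe
  rw [mul_div_assoc', div_sub_div_same, div_eq_iff hD]
  push_cast
  linear_combination (norm := ring_nf) (-q ^ 2) * cos_add_mul_add_cos_sub_mul n 2 θ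
    + (-2 * q ^ 2 * cos (n * θ)) * cos_two_mul θ

theorem sq_add_one_sq_sub_two_mul_cos_sq_pos {q : ℝ} (hq : 1 < q) (θ : ℝ) :
    0 < (q ^ 2 + 1) ^ 2 - (2 * q * cos θ) ^ 2 := by
  rw [sq_add_one_sq_sub_two_mul_cos_sq]
  have : 1 < q ^ 2 := one_lt_pow₀ hq two_ne_zero
  positivity

theorem abs_kernelRe_le {q : ℝ} (hq : 1 < q) (n : ℕ) (θ : ℝ) :
    |kernelRe q n θ| ≤ (q ^ 2 + 1) / (q ^ 2 - 1) ^ 2 := by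
  have hq2 : 0 < q ^ 2 - 1 := by nlinarith
  unfold kernelRe
  rw [abs_div, abs_of_pos (sq_add_one_sq_sub_two_mul_cos_sq_pos hq θ)]
  gcongr
  · calc |q ^ 2 * cos (n * θ) - cos ((n - 2) * θ)|
        ≤ |q ^ 2 * cos (n * θ)| + |cos ((n - 2) * θ)| := abs_sub _ _
      _ ≤ q ^ 2 * 1 + 1 := by
        rw [abs_mul, abs_of_nonneg (sq_nonneg q)]
        gcongr <;> exact abs_cos_le_one _
      _ = q ^ 2 + 1 := by ring
  · rw [sq_add_one_sq_sub_two_mul_cos_sq]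
    exact le_add_of_nonneg_right (sq_nonneg _)

theorem continuous_kernelRe {q : ℝ} (hq : 1 < q) (n : ℕ) : Continuous (kernelRe q n) :=
  Continuous.div (by fun_prop) (by fun_prop) fun θ =>
    (sq_add_one_sq_sub_two_mul_cos_sq_pos hq θ).ne'

theorem integral_kernelRe_eq_zero {q : ℝ} (hq : 1 < q) {n : ℕ} (hn : n ≠ 0) :
    ∫ θ in (0 : ℝ)..π, kernelRe q n θ = 0 := by
  have hint : ∀ m, IntervalIntegrable (kernelRe q m) volume 0 π :=
    fun m => (continuous_kernelRe hq m).intervalIntegrable _ _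
  refine eq_zero_of_bounded_of_succ_eq_mul
    (a := fun m => ∫ θ in (0 : ℝ)..π, kernelRe q (n + 2 * m) θ)
    (B := (q ^ 2 + 1) / (q ^ 2 - 1) ^ 2 * π) (one_lt_pow₀ hq two_ne_zero)
    (fun m => ?_) (fun m => ?_)
  · have hrec := integral_congr (μ := volume) (a := 0) (b := π)
      fun θ _ => kernelRe_recurrence (sq_add_one_sq_sub_two_mul_cos_sq_pos hq θ).ne' (n + 2 * m)
    rw [integral_sub ((hint _).const_mul _) (hint _), intervalIntegral.integral_const_mul,
      integral_cos_nat_mul_eq_zero (by omega)] at hrec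
    rw [show n + 2 * (m + 1) = n + 2 * m + 2 by ring]
    linarith
  · have := norm_integral_le_of_norm_le_const (a := 0) (b := π) (f := kernelRe q (n + 2 * m))
      fun θ _ => abs_kernelRe_le hq (n + 2 * m) θ
    simpa [abs_of_pos pi_pos] using this

theorem treeF_eval_two_mul_cos_mul_sq (q θ : ℝ) {n : ℕ} (hn : n ≠ 0) :
    (treeF (q ^ 2 + 1) n).eval (2 * q * cos θ) * (2 * q * sin θ) ^ 2 =
      2 * q ^ n * (((q ^ 2 + 1) ^ 2 - (2 * q * cos θ) ^ 2) * cos (n * θ)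
        - (q ^ 2 - 1) * (q ^ 2 * cos (n * θ) - cos ((n - 2) * θ))) := by
  obtain ⟨m, rfl⟩ : ∃ m, n = m + 1 := ⟨n - 1, by omega⟩
  clear hn
  induction m using Nat.twoStepInduction with
  | zero =>
    simp only [treeF, eval_X]
    push_cast
    rw [show ((1 : ℝ) - 2) * θ = -θ by ring, cos_neg, one_mul]
    linear_combination (8 * q ^ 3 * cos θ) * sin_sq_add_cos_sq θ
  | one =>
    simp only [treeF, eval_sub, eval_pow, eval_X, eval_C]
    push_cast
    rw [show ((2 : ℝ) - 2) * θ = 0 by ring, cos_zero, cos_two_mul]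
    linear_combination (4 * q ^ 2 * (4 * q ^ 2 * cos θ ^ 2 - q ^ 2 - 1)) * sin_sq_add_cos_sq θ
  | more j h0 h1 =>
    simp only [treeF, eval_sub, eval_mul, eval_X, eval_C] at h1 h0 ⊢
    push_cast at h1 h0 ⊢
    linear_combination (norm := ring_nf) (2 * q * cos θ) * h1 - q ^ 2 * h0
      - 2 * q ^ (j + 3) * ((q ^ 2 + 1) ^ 2 - (2 * q * cos θ) ^ 2 - (q ^ 2 - 1) * q ^ 2)
        * cos_add_mul_add_cos_sub_mul ((j : ℝ) + 2) 1 θ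
      - 2 * q ^ (j + 3) * (q ^ 2 - 1) * cos_add_mul_add_cos_sub_mul (j : ℝ) 1 θ

theorem kestenMcKayFunctional_treeF {q : ℝ} (hq : 1 ≤ q) {n : ℕ} (hn : n ≠ 0) :
    kestenMcKayFunctional q (treeF (q ^ 2 + 1) n) = 0 := by
  have hpt : EqOn (fun θ => (treeF (q ^ 2 + 1) n).eval (2 * q * cos θ) * kestenMcKayWeight q θ)
      (fun θ => 2 * q ^ n * (cos (n * θ) - (q ^ 2 - 1) * kernelRe q n θ)) (Ioo 0 π) := by
    intro θ hθ
    have hD : 0 < (q ^ 2 + 1) ^ 2 - (2 * q * cos θ) ^ 2 := by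
      rw [sq_add_one_sq_sub_two_mul_cos_sq]
      have := sin_pos_of_pos_of_lt_pi hθ.1 hθ.2
      positivity
    simp only [kestenMcKayWeight, kernelRe, div_eq_mul_inv]
    linear_combination
      ((q ^ 2 + 1) ^ 2 - (2 * q * cos θ) ^ 2)⁻¹ * treeF_eval_two_mul_cos_mul_sq q θ hn
        + 2 * q ^ n * cos (n * θ) * mul_inv_cancel₀ hD.ne'
  rw [kestenMcKayFunctional_apply, integral_congr_Ioo_of_le pi_pos.le hpt,
    intervalIntegral.integral_const_mul]
  rcases hq.eq_or_lt with rfl | hq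
  · simp [integral_cos_nat_mul_eq_zero hn]
  · have hcos : IntervalIntegrable (fun θ => cos (n * θ)) volume 0 π :=
      (by fun_prop : Continuous fun θ => cos (n * θ)).intervalIntegrable _ _
    rw [integral_sub hcos (((continuous_kernelRe hq n).intervalIntegrable _ _).const_mul _),
      intervalIntegral.integral_const_mul, integral_kernelRe_eq_zero hq hn,
      integral_cos_nat_mul_eq_zero hn]
    simp

theorem X_mul_treeF (k : ℝ) (n : ℕ) :
    X * treeF k (n + 1) = treeF k (n + 2) + C (if n = 0 then k else k - 1) * treeF k n := by
  rcases n with _ | n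
  · simp [treeF, sq]
  · rw [if_neg n.succ_ne_zero, treeF.eq_4]
    ring

theorem kestenMcKayFunctional_treeF_mul_treeF {q : ℝ} (hq : 1 ≤ q) {i j : ℕ} (hij : i ≠ j) :
    kestenMcKayFunctional q (treeF (q ^ 2 + 1) i * treeF (q ^ 2 + 1) j) = 0 :=
  map_mul_eq_zero_of_threeTermRecurrence (kestenMcKayFunctional q) rfl rfl (X_mul_treeF _)
    (fun _ => kestenMcKayFunctional_treeF hq) hij

open MeasureTheory in
theorem treeF_orthogonal (k : ℕ) (hk : 2 ≤ k) (i j : ℕ) (hij : i ≠ j) :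
    ∫ x in (-(2 * Real.sqrt ((k : ℝ) - 1)))..(2 * Real.sqrt ((k : ℝ) - 1)),
      (treeF (k : ℝ) i).eval x * (treeF (k : ℝ) j).eval x *
        (Real.sqrt (4 * ((k : ℝ) - 1) - x ^ 2) / ((k : ℝ) ^ 2 - x ^ 2)) = 0 := by
  set q := √((k : ℝ) - 1)
  have hk1 : (1 : ℝ) ≤ k - 1 := by
    have : (2 : ℝ) ≤ k := by exact_mod_cast hk
    linarith
  have hq : 1 ≤ q := Real.one_le_sqrt.mpr hk1
  have hkq : (k : ℝ) = q ^ 2 + 1 := by rw [Real.sq_sqrt (by linarith)]; ring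
  rw [integral_neg_self_eq_integral_sin_mul_comp_cos (c := 2 * q) (by positivity), hkq]
  convert kestenMcKayFunctional_treeF_mul_treeF hq hij using 1
  refine intervalIntegral.integral_congr fun θ hθ => ?_
  rw [uIcc_of_le pi_pos.le] at hθ
  have hsin : 0 ≤ sin θ := sin_nonneg_of_nonneg_of_le_pi hθ.1 hθ.2
  have hsqrt : √(4 * (q ^ 2 + 1 - 1) - (2 * q * cos θ) ^ 2) = 2 * q * sin θ := by
    rw [← Real.sqrt_sq (by positivity : 0 ≤ 2 * q * sin θ)]
    congr 1
    linear_combination (-4 * q ^ 2) * sin_sq_add_cos_sq θ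
  simp only [hsqrt, kestenMcKayWeight, eval_mul]
  ring
end

section
/- Let G be a connected k-regular simple graph with adjacency matrix A. Then the (u,v)-entry of F_i^{(k)}(A) equals the number of irreducible paths of length i from u to v, where a path is irreducible if it contains no subsequence of the form u_j ~ u_{j+1} ~ u_j. -/
open Polynomial

/-!
Write `N_i(u, v)` for the number of irreducible paths of length `i` from `u` to `v`. Prepending
the step `u → w` to an irreducible path of length `i` from a neighbour `w` of `u` yields an
irreducible path unless that path steps straight back to `u`, and such backtracking paths
correspond to irreducible paths of length `i - 1` from `u` whose first step avoids `w`. Summing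
over the `k` neighbours gives `A N_1 = N_2 + k N_0` and `A N_{i+2} = N_{i+3} + (k - 1) N_{i+1}`,
the recurrence defining `F_i`; with `N_0 = 1` and `N_1 = A` this forces `F_i(A) = N_i`.
-/

theorem aeval_treeF_eq_of_recurrence {R : Type*} [Ring R] [Algebra ℝ R] (k : ℝ) (a : R)
    (M : ℕ → R) (h0 : M 0 = 1) (h1 : M 1 = a) (h2 : M 2 = a * M 1 - k • M 0)
    (hrec : ∀ i, M (i + 3) = a * M (i + 2) - (k - 1) • M (i + 1)) (i : ℕ) :
    aeval a (treeF k i) = M i := by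
  induction i using treeF.induct with
  | case1 => rw [treeF, map_one, h0]
  | case2 => rw [treeF, aeval_X, h1]
  | case3 => rw [treeF, map_sub, map_pow, aeval_X, aeval_C, h2, h1, h0, sq,
      Algebra.algebraMap_eq_smul_one]
  | case4 n ih2 ih1 =>
    rw [treeF, map_sub, map_mul, map_mul, aeval_X, aeval_C, ih2, ih1, hrec, Algebra.smul_def]

namespace SimpleGraph

variable {V : Type*} (G : SimpleGraph V)

/-- A path of length `i` is encoded as a sequence that stays at its endpoint from index `i` on. -/
def IrreduciblePath (i : ℕ) (u v : V) : Type _ :=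
  {p : ℕ → V // p 0 = u ∧ (∀ j, j < i → G.Adj (p j) (p (j + 1))) ∧
    (∀ j, i ≤ j → p j = v) ∧ (∀ j, j + 2 ≤ i → p j ≠ p (j + 2))}

noncomputable def irreduciblePathMatrix (i : ℕ) : Matrix V V ℝ :=
  Matrix.of fun u v => Nat.card (G.IrreduciblePath i u v)

variable {G} {i : ℕ} {u v w : V}

namespace IrreduciblePath

instance : CoeFun (G.IrreduciblePath i u v) (fun _ => ℕ → V) := ⟨Subtype.val⟩

variable (p : G.IrreduciblePath i u v)

theorem apply_zero : p 0 = u := p.2.1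

theorem adj {j : ℕ} (hj : j < i) : G.Adj (p j) (p (j + 1)) := p.2.2.1 j hj

theorem apply_of_le {j : ℕ} (hj : i ≤ j) : p j = v := p.2.2.2.1 j hj

theorem apply_ne {j : ℕ} (hj : j + 2 ≤ i) : p j ≠ p (j + 2) := p.2.2.2.2 j hj

@[ext]
theorem ext {q : G.IrreduciblePath i u v} (h : ∀ j, p j = q j) : p = q :=
  Subtype.ext (funext h)

instance [Finite V] : Finite (G.IrreduciblePath i u v) := by
  refine Finite.of_injective (fun p : G.IrreduciblePath i u v => fun j : Fin (i + 1) => p j) ?_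
  intro p q h
  ext j
  rcases le_or_gt i j with hij | hij
  · rw [p.apply_of_le hij, q.apply_of_le hij]
  · exact congrFun h ⟨j, by omega⟩

theorem eq_of_length_zero (p : G.IrreduciblePath 0 u v) : u = v :=
  p.apply_zero.symm.trans (p.apply_of_le le_rfl)

theorem adj_apply_one (p : G.IrreduciblePath (i + 1) u v) : G.Adj u (p 1) := by
  simpa only [p.apply_zero] using p.adj i.succ_pos

def tail (p : G.IrreduciblePath (i + 1) u v) (hw : p 1 = w) : G.IrreduciblePath i w v :=
  ⟨fun j => p (j + 1), hw, fun _ hj => p.adj (by omega), fun _ hj => p.apply_of_le (by omega),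
    fun _ hj => p.apply_ne (by omega)⟩

theorem tail_apply_one_ne (p : G.IrreduciblePath (i + 1) u v) (hw : p 1 = w) :
    p.tail hw 1 ≠ u := by
  rcases i with _ | i
  · have h := p.adj_apply_one
    rw [p.apply_of_le le_rfl] at h
    exact (p.apply_of_le (by omega : 1 ≤ 2)).trans_ne h.ne'
  · exact fun h => p.apply_ne (by omega : 0 + 2 ≤ i + 2) (p.apply_zero.trans h.symm)

def cons (h : G.Adj u w) (q : G.IrreduciblePath i w v) (hq : q 1 ≠ u) :
    G.IrreduciblePath (i + 1) u v :=
  ⟨fun | 0 => u | j + 1 => q j, rfl,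
    fun | 0, _ => by simpa only [q.apply_zero] using h | _ + 1, hj => q.adj (by omega),
    fun | _ + 1, hj => q.apply_of_le (by omega),
    fun | 0, _ => hq.symm | _ + 1, hj => q.apply_ne (by omega)⟩

def consEquiv (h : G.Adj u w) :
    {q : G.IrreduciblePath i w v // q 1 ≠ u} ≃ {p : G.IrreduciblePath (i + 1) u v // p 1 = w} where
  toFun q := ⟨cons h q.1 q.2, q.1.apply_zero⟩
  invFun p := ⟨p.1.tail p.2, p.1.tail_apply_one_ne p.2⟩
  left_inv _ := rfl
  right_inv p := Subtype.ext <| IrreduciblePath.ext _ fun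
    | 0 => p.1.apply_zero.symm
    | _ + 1 => rfl

end IrreduciblePath

theorem card_irreduciblePath_zero [DecidableEq V] (u v : V) :
    Nat.card (G.IrreduciblePath 0 u v) = if u = v then 1 else 0 := by
  split_ifs with h
  · subst h
    refine Nat.card_eq_one_iff_exists.mpr ⟨⟨fun _ => u, rfl, by simp, fun _ _ => rfl, by simp⟩, ?_⟩
    exact fun p => IrreduciblePath.ext _ fun j => p.apply_of_le j.zero_le
  · exact Nat.card_eq_zero.mpr (.inl ⟨fun p => h p.eq_of_length_zero⟩)

theorem card_irreduciblePath_one [DecidableRel G.Adj] (u v : V) :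
    Nat.card (G.IrreduciblePath 1 u v) = if G.Adj u v then 1 else 0 := by
  split_ifs with h
  · refine Nat.card_eq_one_iff_exists.mpr
      ⟨⟨fun | 0 => u | _ + 1 => v, rfl, fun | 0, _ => h, fun | _ + 1, _ => rfl, by simp⟩, ?_⟩
    exact fun p => IrreduciblePath.ext _ fun
      | 0 => p.apply_zero
      | _ + 1 => p.apply_of_le (by omega)
  · refine Nat.card_eq_zero.mpr (.inl ⟨fun p => h ?_⟩)
    simpa only [p.apply_of_le le_rfl] using p.adj_apply_one

theorem irreduciblePathMatrix_zero [DecidableEq V] : G.irreduciblePathMatrix 0 = 1 := by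
  ext u v
  simp [irreduciblePathMatrix, card_irreduciblePath_zero, Matrix.one_apply]

theorem irreduciblePathMatrix_one [DecidableRel G.Adj] :
    G.irreduciblePathMatrix 1 = G.adjMatrix ℝ := by
  ext u v
  simp [irreduciblePathMatrix, card_irreduciblePath_one, adjMatrix_apply]

theorem card_irreduciblePath_zero_apply_one_eq_of_ne (h : w ≠ u) :
    Nat.card {p : G.IrreduciblePath 0 u v // p 1 = w} = 0 :=
  Nat.card_eq_zero.mpr <| .inl ⟨fun p =>
    h ((p.2.symm.trans (p.1.apply_of_le zero_le_one)).trans p.1.eq_of_length_zero.symm)⟩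

theorem card_irreduciblePath_succ_apply_one_eq_add [Finite V] (h : G.Adj u w) :
    Nat.card {p : G.IrreduciblePath (i + 1) u v // p 1 = w} +
      Nat.card {q : G.IrreduciblePath i w v // q 1 = u} =
        Nat.card (G.IrreduciblePath i w v) := by
  classical
  rw [← Nat.card_congr (IrreduciblePath.consEquiv h), add_comm, ← Nat.card_sum,
    Nat.card_congr (Equiv.sumCompl _)]

variable [Fintype V] [DecidableRel G.Adj]

theorem card_irreduciblePath_succ (i : ℕ) (u v : V) :
    Nat.card (G.IrreduciblePath (i + 1) u v) =
      ∑ w ∈ G.neighborFinset u, Nat.card {p : G.IrreduciblePath (i + 1) u v // p 1 = w} := by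
  rw [← Nat.card_congr (Equiv.sigmaFiberEquiv fun p : G.IrreduciblePath (i + 1) u v => p 1),
    Nat.card_sigma]
  refine (Finset.sum_subset (Finset.subset_univ _) fun w _ hw => ?_).symm
  refine Nat.card_eq_zero.mpr (.inl ⟨fun p => hw ?_⟩)
  exact (G.mem_neighborFinset u w).mpr (p.2 ▸ p.1.adj_apply_one)

theorem sum_card_irreduciblePath (i : ℕ) (u v : V) :
    ∑ w ∈ G.neighborFinset u, Nat.card (G.IrreduciblePath i w v) =
      Nat.card (G.IrreduciblePath (i + 1) u v) +
        ∑ w ∈ G.neighborFinset u, Nat.card {q : G.IrreduciblePath i w v // q 1 = u} := by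
  rw [card_irreduciblePath_succ, ← Finset.sum_add_distrib]
  exact Finset.sum_congr rfl fun w hw =>
    (card_irreduciblePath_succ_apply_one_eq_add ((G.mem_neighborFinset u w).mp hw)).symm

theorem sum_card_irreduciblePath_backtracking {k : ℕ} (hreg : G.IsRegularOfDegree k)
    (i : ℕ) (u v : V) :
    ∑ w ∈ G.neighborFinset u, Nat.card {q : G.IrreduciblePath (i + 1) w v // q 1 = u} +
      ∑ w ∈ G.neighborFinset u, Nat.card {p : G.IrreduciblePath i u v // p 1 = w} =
        k * Nat.card (G.IrreduciblePath i u v) := by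
  rw [← Finset.sum_add_distrib, Finset.sum_congr rfl fun w hw =>
      card_irreduciblePath_succ_apply_one_eq_add ((G.mem_neighborFinset u w).mp hw).symm,
    Finset.sum_const, card_neighborFinset_eq_degree, hreg.degree_eq, smul_eq_mul]

theorem adjMatrix_mul_irreduciblePathMatrix_one {k : ℕ} (hreg : G.IsRegularOfDegree k) :
    G.adjMatrix ℝ * G.irreduciblePathMatrix 1 =
      G.irreduciblePathMatrix 2 + (k : ℝ) • G.irreduciblePathMatrix 0 := by
  ext u v
  have hback := sum_card_irreduciblePath_backtracking hreg 0 u v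
  rw [Finset.sum_eq_zero fun w hw => card_irreduciblePath_zero_apply_one_eq_of_ne
    (G.ne_of_adj ((G.mem_neighborFinset u w).mp hw)).symm, add_zero] at hback
  simp only [adjMatrix_mul_apply, irreduciblePathMatrix, Matrix.of_apply, Matrix.add_apply,
    Matrix.smul_apply, smul_eq_mul]
  exact_mod_cast hback ▸ sum_card_irreduciblePath 1 u v

theorem adjMatrix_mul_irreduciblePathMatrix_add_two {k : ℕ} (hreg : G.IsRegularOfDegree k)
    (i : ℕ) : G.adjMatrix ℝ * G.irreduciblePathMatrix (i + 2) =
      G.irreduciblePathMatrix (i + 3) + ((k : ℝ) - 1) • G.irreduciblePathMatrix (i + 1) := by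
  ext u v
  have hforward := sum_card_irreduciblePath (G := G) (i + 2) u v
  have hback := sum_card_irreduciblePath_backtracking hreg (i + 1) u v
  rw [← card_irreduciblePath_succ] at hback
  simp only [adjMatrix_mul_apply, irreduciblePathMatrix, Matrix.of_apply, Matrix.add_apply,
    Matrix.smul_apply, smul_eq_mul]
  rify at hforward hback
  linarith

end SimpleGraph

theorem treeF_adjMatrix_entry_general (V : Type) [Fintype V] [DecidableEq V]
    (G : SimpleGraph V) [DecidableRel G.Adj] (k : ℕ)
    (hreg : G.IsRegularOfDegree k) (i : ℕ) (u v : V) :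
    (Polynomial.aeval (G.adjMatrix ℝ) (treeF (k : ℝ) i)) u v =
      (Nat.card {p : ℕ → V // p 0 = u ∧ (∀ j, j < i → G.Adj (p j) (p (j + 1))) ∧
        (∀ j, i ≤ j → p j = v) ∧ (∀ j, j + 2 ≤ i → p j ≠ p (j + 2))} : ℝ) := by
  have hmatrix : aeval (G.adjMatrix ℝ) (treeF (k : ℝ) i) = G.irreduciblePathMatrix i :=
    aeval_treeF_eq_of_recurrence _ _ _ G.irreduciblePathMatrix_zero G.irreduciblePathMatrix_one
      (by rw [G.adjMatrix_mul_irreduciblePathMatrix_one hreg, add_sub_cancel_right])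
      (fun j => by rw [G.adjMatrix_mul_irreduciblePathMatrix_add_two hreg, add_sub_cancel_right]) i
  rw [hmatrix]
  rfl

theorem treeF_adjMatrix_entry (V : Type) [Fintype V] [DecidableEq V]
    (G : SimpleGraph V) [DecidableRel G.Adj] (k : ℕ) (hk : 2 ≤ k)
    (hreg : G.IsRegularOfDegree k) (hconn : G.Connected) (i : ℕ) (u v : V) :
    (Polynomial.aeval (G.adjMatrix ℝ) (treeF (k : ℝ) i)) u v =
      (Nat.card {p : ℕ → V // p 0 = u ∧ (∀ j, j < i → G.Adj (p j) (p (j + 1))) ∧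
        (∀ j, i ≤ j → p j = v) ∧ (∀ j, j + 2 ≤ i → p j ≠ p (j + 2))} : ℝ) :=
  treeF_adjMatrix_entry_general V G k hreg i u v
end

section
/- Let G be a connected k-regular simple graph with adjacency matrix A. Then tr(F_i^{(k)}(A)) ≥ 0 for all i ≥ 0. -/
/-!
Let `S` (vertices × darts) and `T` (darts × vertices) be the tail and head incidence matrices of
the darts of `G`, `J` the reversal permutation of darts and `B = T S - J` the non-backtracking
(Hashimoto) matrix. Then `S T = A`, `S Sᵀ = k • 1`, `T A = B T + Sᵀ` and `B Sᵀ = (k - 1) T`,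
which turn the three-term recurrence of `F_i` into `F_{n+1}(A) = S Bⁿ T`. Hence every entry of
`F_i(A)` is a number of non-backtracking walks, so the diagonal, and with it the trace, is
nonnegative.
-/

open Polynomial

open Matrix Finset

theorem Matrix.mul_apply_nonneg {l m n R : Type*} [Fintype m] [Semiring R] [PartialOrder R]
    [IsOrderedRing R] {M : Matrix l m R} {N : Matrix m n R} (hM : ∀ i j, 0 ≤ M i j)
    (hN : ∀ i j, 0 ≤ N i j) (i : l) (j : n) : 0 ≤ (M * N) i j :=
  sum_nonneg fun _ _ => mul_nonneg (hM _ _) (hN _ _)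

namespace SimpleGraph

variable {V : Type*} [DecidableEq V] (G : SimpleGraph V) (R : Type*)

def dartFstMatrix [Zero R] [One R] : Matrix V G.Dart R := of fun v d => if d.fst = v then 1 else 0

def dartSndMatrix [Zero R] [One R] : Matrix G.Dart V R := of fun d v => if d.snd = v then 1 else 0

def dartSymmMatrix [Zero R] [One R] : Matrix G.Dart G.Dart R :=
  (Dart.symm_involutive.toPerm _).permMatrix R

def nonbacktrackingMatrix [Zero R] [One R] : Matrix G.Dart G.Dart R :=
  of fun d e => if e.fst = d.snd ∧ e.snd ≠ d.fst then 1 else 0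

section Semiring

variable [Fintype V] [DecidableRel G.Adj] [Semiring R]

theorem card_dart_fst_snd (u v : V) :
    #{d : G.Dart | d.fst = u ∧ d.snd = v} = if G.Adj u v then 1 else 0 := by
  split_ifs with h
  · rw [card_eq_one]
    refine ⟨⟨(u, v), h⟩, ?_⟩
    ext d
    simp [Dart.ext_iff, Prod.ext_iff]
  · rw [card_eq_zero, filter_eq_empty_iff]
    rintro d - ⟨rfl, rfl⟩
    exact h d.adj

theorem dartFstMatrix_mul_dartSndMatrix :
    G.dartFstMatrix R * G.dartSndMatrix R = G.adjMatrix R := by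
  ext u v
  simp only [dartFstMatrix, dartSndMatrix, mul_apply, of_apply, ite_mul, one_mul, zero_mul,
    ← ite_and, sum_boole, card_dart_fst_snd, adjMatrix_apply]
  split_ifs <;> simp

theorem dartFstMatrix_mul_transpose :
    G.dartFstMatrix R * (G.dartFstMatrix R)ᵀ = G.degMatrix R := by
  ext u v
  simp only [dartFstMatrix, mul_apply, transpose_apply, of_apply, ite_mul, one_mul, zero_mul,
    ← ite_and, sum_boole, degMatrix, diagonal_apply]
  split_ifs with h
  · subst h
    simp [dart_fst_fiber_card_eq_degree]
  · rw [filter_false_of_mem fun d _ hd => h (hd.1.symm.trans hd.2), card_empty, Nat.cast_zero]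

theorem dartSymmMatrix_mul_dartSndMatrix :
    G.dartSymmMatrix R * G.dartSndMatrix R = (G.dartFstMatrix R)ᵀ := by
  ext d v
  simp [dartSymmMatrix, dartSndMatrix, dartFstMatrix, PEquiv.toMatrix_toPEquiv_mul]

theorem dartSymmMatrix_mul_transpose_dartFstMatrix :
    G.dartSymmMatrix R * (G.dartFstMatrix R)ᵀ = G.dartSndMatrix R := by
  ext d v
  simp [dartSymmMatrix, dartSndMatrix, dartFstMatrix, PEquiv.toMatrix_toPEquiv_mul]

variable {G} in
theorem IsRegularOfDegree.degMatrix_eq {k : ℕ} (hG : G.IsRegularOfDegree k) :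
    G.degMatrix R = (k : R) • 1 := by
  rw [degMatrix, smul_one_eq_diagonal]
  exact congrArg diagonal (funext fun v => congrArg Nat.cast (hG v))

end Semiring

section Ring

variable [Fintype V] [Ring R]

theorem dartSndMatrix_mul_dartFstMatrix_sub_dartSymmMatrix :
    G.dartSndMatrix R * G.dartFstMatrix R - G.dartSymmMatrix R = G.nonbacktrackingMatrix R := by
  ext d e
  simp only [dartFstMatrix, dartSndMatrix, dartSymmMatrix, nonbacktrackingMatrix,
    Matrix.sub_apply, mul_apply, of_apply, ite_mul, one_mul, zero_mul, sum_ite_eq, mem_univ,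
    if_true, PEquiv.toMatrix_apply, Equiv.toPEquiv_apply, Option.mem_def, Option.some_inj,
    Function.Involutive.coe_toPerm]
  have hsymm : d.symm = e ↔ e.fst = d.snd ∧ e.snd = d.fst := by
    simp [Dart.ext_iff, Prod.ext_iff, eq_comm]
  simp only [hsymm]
  split_ifs <;> simp_all

variable [DecidableRel G.Adj]

theorem dartSndMatrix_mul_adjMatrix :
    G.dartSndMatrix R * G.adjMatrix R =
      G.nonbacktrackingMatrix R * G.dartSndMatrix R + (G.dartFstMatrix R)ᵀ := by
  rw [← dartSndMatrix_mul_dartFstMatrix_sub_dartSymmMatrix, Matrix.sub_mul, Matrix.mul_assoc,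
    dartFstMatrix_mul_dartSndMatrix, dartSymmMatrix_mul_dartSndMatrix, sub_add_cancel]

theorem nonbacktrackingMatrix_mul_transpose_dartFstMatrix :
    G.nonbacktrackingMatrix R * (G.dartFstMatrix R)ᵀ =
      G.dartSndMatrix R * G.degMatrix R - G.dartSndMatrix R := by
  rw [← dartSndMatrix_mul_dartFstMatrix_sub_dartSymmMatrix, Matrix.sub_mul, Matrix.mul_assoc,
    dartFstMatrix_mul_transpose, dartSymmMatrix_mul_transpose_dartFstMatrix]

end Ring

section TreeF

variable [Fintype V] [DecidableRel G.Adj] {k : ℕ}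

local notation "A" => G.adjMatrix ℝ
local notation "S" => G.dartFstMatrix ℝ
local notation "T" => G.dartSndMatrix ℝ
local notation "B" => G.nonbacktrackingMatrix ℝ

theorem aeval_adjMatrix_treeF_succ (hG : G.IsRegularOfDegree k) :
    ∀ n, aeval A (treeF k (n + 1)) = S * B ^ n * T
  | 0 => by rw [treeF, aeval_X, pow_zero, Matrix.mul_one, dartFstMatrix_mul_dartSndMatrix]
  | 1 => by
    rw [treeF, map_sub, map_pow, aeval_X, aeval_C, Algebra.algebraMap_eq_smul_one, sq, pow_one]
    calc A * A - (k : ℝ) • 1 = S * (T * A) - (k : ℝ) • 1 := by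
          rw [← Matrix.mul_assoc, dartFstMatrix_mul_dartSndMatrix]
      _ = S * B * T := by
          rw [dartSndMatrix_mul_adjMatrix, Matrix.mul_add, dartFstMatrix_mul_transpose,
            hG.degMatrix_eq ℝ, Matrix.mul_assoc, add_sub_cancel_right]
  | n + 2 => by
    have hB : B * (S)ᵀ = ((k : ℝ) - 1) • T := by
      rw [nonbacktrackingMatrix_mul_transpose_dartFstMatrix, hG.degMatrix_eq ℝ, Matrix.mul_smul,
        Matrix.mul_one, sub_smul, one_smul]
    rw [treeF, mul_comm X, map_sub, map_mul, map_mul, aeval_X, aeval_C,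
      aeval_adjMatrix_treeF_succ hG (n + 1), aeval_adjMatrix_treeF_succ hG n,
      Algebra.algebraMap_eq_smul_one, smul_mul_assoc, Matrix.one_mul]
    calc S * B ^ (n + 1) * T * A - ((k : ℝ) - 1) • (S * B ^ n * T)
        = S * B ^ (n + 1) * (T * A) - S * B ^ n * (B * (S)ᵀ) := by
          rw [hB, Matrix.mul_smul, Matrix.mul_assoc (S * B ^ (n + 1))]
      _ = S * B ^ (n + 2) * T := by
          rw [dartSndMatrix_mul_adjMatrix]
          simp only [Matrix.mul_add, pow_succ, Matrix.mul_assoc]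
          exact add_sub_cancel_right _ _

theorem aeval_adjMatrix_treeF_apply_nonneg (hG : G.IsRegularOfDegree k) (i : ℕ) (u v : V) :
    0 ≤ aeval A (treeF k i) u v := by
  have hBool (p : Prop) [Decidable p] : (0 : ℝ) ≤ if p then 1 else 0 :=
    ite_nonneg zero_le_one le_rfl
  cases i with
  | zero => rw [treeF, map_one, one_apply]; exact hBool _
  | succ n =>
    rw [aeval_adjMatrix_treeF_succ G hG n]
    exact mul_apply_nonneg (mul_apply_nonneg (fun _ _ => hBool _)
      (pow_apply_nonneg (fun _ _ => hBool _) n)) (fun _ _ => hBool _) u v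

end TreeF

end SimpleGraph

theorem treeF_trace_nonneg_general (V : Type) [Fintype V] [DecidableEq V]
    (G : SimpleGraph V) [DecidableRel G.Adj] (k : ℕ)
    (hreg : G.IsRegularOfDegree k) (i : ℕ) :
    0 ≤ Matrix.trace (Polynomial.aeval (G.adjMatrix ℝ) (treeF (k : ℝ) i)) :=
  sum_nonneg fun v _ => G.aeval_adjMatrix_treeF_apply_nonneg hreg i v v

theorem treeF_trace_nonneg (V : Type) [Fintype V] [DecidableEq V]
    (G : SimpleGraph V) [DecidableRel G.Adj] (k : ℕ) (hk : 2 ≤ k)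
    (hreg : G.IsRegularOfDegree k) (hconn : G.Connected) (i : ℕ) :
    0 ≤ Matrix.trace (Polynomial.aeval (G.adjMatrix ℝ) (treeF (k : ℝ) i)) :=
  treeF_trace_nonneg_general V G k hreg i
end

section
/- Let G be a connected k-regular simple graph with adjacency matrix A and girth g. Then tr(F_i^{(k)}(A))=0 for each 1≤i≤g-1 and tr(F_g^{(k)}(A))≠0. Conversely, if tr(F_i^{(k)}(A))=0 for 1≤i≤g-1 and tr(F_g^{(k)}(A))≠0, then G has girth g. -/
/-!
Entry `(u, v)` of `F_n(A)` is the number of non-backtracking walks of length `n` from `u` to `v`.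
Prefixing an edge `u w` to a non-backtracking walk of length `n + 2` from `w` gives one of length
`n + 3` from `u` unless the walk steps straight back to `u`; those exceptional walks are, up to the
choice of `w`, the non-backtracking walks of length `n + 1` from `u`, each counted `k - 1` times.
This is the recursion defining `F`. Hence `tr F_n(A)` counts closed non-backtracking walks of
length `n`. A non-backtracking walk shorter than the girth is a path, so there is no such closed
walk for `1 ≤ n < girth`, whereas a shortest cycle is one of length `girth`.
-/

open Polynomial

namespace Finset

lemma sum_card_filter_ne_add_card {α β : Type*} [DecidableEq β] {s : Finset α}
    {t : Finset β} {f : α → β} (hf : ∀ a ∈ s, f a ∈ t) :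
    ∑ b ∈ t, #{a ∈ s | f a ≠ b} + #s = #t * #s := by
  calc ∑ b ∈ t, #{a ∈ s | f a ≠ b} + #s
      = ∑ b ∈ t, (#{a ∈ s | f a = b} + #{a ∈ s | f a ≠ b}) := by
        rw [sum_add_distrib, ← card_eq_sum_card_fiberwise fun a ha => hf a ha, add_comm]
    _ = #t * #s := by
        rw [sum_congr rfl fun b _ => card_filter_add_card_filter_not _, sum_const, smul_eq_mul]

end Finset

namespace SimpleGraph

open Finset

variable {V : Type*} {G : SimpleGraph V}

namespace Walk

variable {u v w x : V}

/-- The irreducible paths counted by `F_i(A)`. -/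
def IsNonBacktracking (p : G.Walk u v) : Prop :=
  p.darts.IsChain fun d d' => d' ≠ d.symm

instance [DecidableEq V] (p : G.Walk u v) : Decidable p.IsNonBacktracking :=
  inferInstanceAs (Decidable (List.IsChain _ _))

lemma cons_injective (h : G.Adj u v) : Function.Injective (cons h : G.Walk v w → G.Walk u w) :=
  fun _ _ hpq => by cases hpq; rfl

lemma isNonBacktracking_of_length_le_one {p : G.Walk u v} (hp : p.length ≤ 1) :
    p.IsNonBacktracking := by
  match p, hp with
  | .nil, _ => exact .nil
  | .cons _ .nil, _ => exact .singleton _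

lemma isNonBacktracking_cons_cons_iff (h : G.Adj u v) (h' : G.Adj v w) (p : G.Walk w x) :
    (cons h (cons h' p)).IsNonBacktracking ↔ w ≠ u ∧ (cons h' p).IsNonBacktracking := by
  simp [IsNonBacktracking, Dart.ext_iff]

lemma isNonBacktracking_cons_iff (h : G.Adj u v) {p : G.Walk v w} (hp : ¬p.Nil) :
    (cons h p).IsNonBacktracking ↔ p.snd ≠ u ∧ p.IsNonBacktracking := by
  cases p with
  | nil => exact absurd .nil hp
  | cons h' p => simpa using isNonBacktracking_cons_cons_iff h h' p

lemma IsNonBacktracking.of_cons {h : G.Adj u v} {p : G.Walk v w}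
    (hp : (cons h p).IsNonBacktracking) : p.IsNonBacktracking :=
  List.IsChain.tail hp

lemma IsTrail.isNonBacktracking {p : G.Walk u v} (hp : p.IsTrail) : p.IsNonBacktracking := by
  induction p with
  | nil => exact .nil
  | @cons u w v h q ih =>
    rw [isTrail_cons] at hp
    by_cases hq : q.Nil
    · exact isNonBacktracking_of_length_le_one (by simp [length_eq_zero_iff.mpr hq])
    refine (isNonBacktracking_cons_iff h hq).mpr ⟨fun hsnd => hp.2 ?_, ih hp.1⟩
    simpa [hsnd, Sym2.eq_swap] using q.mk_start_snd_mem_edges hq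

lemma IsNonBacktracking.isPath {p : G.Walk u v} (hp : p.IsNonBacktracking)
    (hlen : p.length < G.egirth) : p.IsPath := by
  classical
  induction p with
  | nil => exact .nil
  | @cons u w v h q ih =>
    have hq : q.IsPath := ih hp.of_cons (lt_of_le_of_lt (by simp) hlen)
    refine hq.cons fun hu => ?_
    -- `q` up to `u`, closed by the edge `u w`, would be a cycle shorter than the girth: its only
    -- possible repeated edge is `w u` as first step, which `hp` forbids
    have hqnil : ¬q.Nil := by rintro ⟨⟩; exact h.ne (by simpa using hu)
    have hr : (q.takeUntil u hu).IsPath := hq.takeUntil hu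
    have hsnd : (q.takeUntil u hu).snd ≠ u := by
      rw [snd_takeUntil h.ne]
      exact ((isNonBacktracking_cons_iff h hqnil).mp hp).1
    have hcyc : (cons h (q.takeUntil u hu)).IsCycle := (cons_isCycle_iff _ h).mpr
      ⟨hr, fun he => hsnd (hr.eq_snd_of_mem_edges (Sym2.eq_swap ▸ he)).symm⟩
    have hle : ((cons h (q.takeUntil u hu)).length : ℕ∞) ≤ (cons h q).length := by
      simpa using q.length_takeUntil_le_length hu
    exact (egirth_le_length hcyc).not_gt (hle.trans_lt hlen)

lemma IsNonBacktracking.egirth_le_length {p : G.Walk u u} (hp : p.IsNonBacktracking)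
    (hnil : ¬p.Nil) : G.egirth ≤ p.length :=
  le_of_not_gt fun hlen => hnil (isPath_iff_nil.mp (hp.isPath hlen))

lemma isNonBacktracking_iff_ne_of_length_eq_two {p : G.Walk u v} (hp : p.length = 2) :
    p.IsNonBacktracking ↔ v ≠ u := by
  match p, hp with
  | .cons h (.cons h' .nil), _ =>
    simp [isNonBacktracking_cons_cons_iff, isNonBacktracking_of_length_le_one]

end Walk

open Walk

section Counting

variable [DecidableEq V] [LocallyFinite G]

lemma filter_finsetWalkLength_succ_snd_eq {n : ℕ} {u v w : V} (h : G.Adj u w)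
    (P : G.Walk u v → Prop) [DecidablePred P] :
    {p ∈ G.finsetWalkLength (n + 1) u v | P p ∧ p.snd = w} =
      {q ∈ G.finsetWalkLength n w v | P (cons h q)}.map ⟨cons h, cons_injective h⟩ := by
  ext p
  simp only [mem_filter, mem_map, mem_finsetWalkLength_iff]
  constructor
  · rintro ⟨hl, hP, hsnd⟩
    cases p with
    | nil => simp at hl
    | cons h' q =>
      rw [snd_cons] at hsnd
      subst hsnd
      exact ⟨q, ⟨by simpa using hl, hP⟩, rfl⟩
  · rintro ⟨q, ⟨hl, hP⟩, rfl⟩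
    exact ⟨by simp [hl], hP, by simp⟩

variable (G) in
def nonBacktrackingWalks (n : ℕ) (u v : V) : Finset (G.Walk u v) :=
  {p ∈ G.finsetWalkLength n u v | p.IsNonBacktracking}

@[simp]
lemma mem_nonBacktrackingWalks {n : ℕ} {u v : V} {p : G.Walk u v} :
    p ∈ G.nonBacktrackingWalks n u v ↔ p.length = n ∧ p.IsNonBacktracking := by
  rw [nonBacktrackingWalks, mem_filter, mem_finsetWalkLength_iff]

lemma snd_mem_neighborFinset_of_mem_nonBacktrackingWalks {n : ℕ} {u v : V} {p : G.Walk u v}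
    (hp : p ∈ G.nonBacktrackingWalks (n + 1) u v) : p.snd ∈ G.neighborFinset u :=
  (mem_neighborFinset ..).mpr (adj_snd (not_nil_iff_lt_length.mpr (by simp_all)))

lemma card_filter_nonBacktrackingWalks_snd_eq {u w : V} (h : G.Adj u w) (n : ℕ) (v : V) :
    #{p ∈ G.nonBacktrackingWalks (n + 2) u v | p.snd = w} =
      #{q ∈ G.nonBacktrackingWalks (n + 1) w v | q.snd ≠ u} := by
  rw [nonBacktrackingWalks, filter_filter, filter_finsetWalkLength_succ_snd_eq h, card_map,
    nonBacktrackingWalks, filter_filter]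
  congr 1
  refine filter_congr fun q hq => ?_
  rw [mem_finsetWalkLength_iff] at hq
  rw [isNonBacktracking_cons_iff _ (by simp [← length_eq_zero_iff, hq])]
  exact and_comm

lemma card_nonBacktrackingWalks_add_two (n : ℕ) (u v : V) :
    #(G.nonBacktrackingWalks (n + 2) u v) =
      ∑ w ∈ G.neighborFinset u, #{q ∈ G.nonBacktrackingWalks (n + 1) w v | q.snd ≠ u} := by
  rw [card_eq_sum_card_fiberwise fun p hp =>
    snd_mem_neighborFinset_of_mem_nonBacktrackingWalks hp]
  exact sum_congr rfl fun w hw =>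
    card_filter_nonBacktrackingWalks_snd_eq ((mem_neighborFinset ..).mp hw) n v

lemma card_nonBacktrackingWalks_add_three {k : ℕ} (hreg : G.IsRegularOfDegree k) (n : ℕ)
    (u v : V) :
    #(G.nonBacktrackingWalks (n + 3) u v) + k * #(G.nonBacktrackingWalks (n + 1) u v) =
      ∑ w ∈ G.neighborFinset u, #(G.nonBacktrackingWalks (n + 2) w v) +
        #(G.nonBacktrackingWalks (n + 1) u v) := by
  have hsplit (w : V) : #(G.nonBacktrackingWalks (n + 2) w v) =
      #{p ∈ G.nonBacktrackingWalks (n + 2) w v | p.snd ≠ u} +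
        #{p ∈ G.nonBacktrackingWalks (n + 2) w v | p.snd = u} :=
    (card_filter_add_card_filter_not _).symm.trans (add_comm _ _)
  have hback :
      ∑ w ∈ G.neighborFinset u, #{q ∈ G.nonBacktrackingWalks (n + 1) u v | q.snd ≠ w} +
        #(G.nonBacktrackingWalks (n + 1) u v) = k * #(G.nonBacktrackingWalks (n + 1) u v) := by
    rw [sum_card_filter_ne_add_card fun q hq =>
      snd_mem_neighborFinset_of_mem_nonBacktrackingWalks hq,
      card_neighborFinset_eq_degree, hreg u]
  rw [card_nonBacktrackingWalks_add_two, ← hback, sum_congr rfl fun w _ => hsplit w,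
    sum_add_distrib, sum_congr rfl fun w hw =>
      card_filter_nonBacktrackingWalks_snd_eq ((mem_neighborFinset ..).mp hw).symm n v]
  ring

end Counting

section Matrix

variable [Fintype V] [DecidableEq V] [DecidableRel G.Adj] (α : Type*) [Semiring α]

variable (G) in
def nonBacktrackingWalkMatrix (n : ℕ) : Matrix V V α :=
  Matrix.of fun u v => #(G.nonBacktrackingWalks n u v)

lemma nonBacktrackingWalkMatrix_of_le_one {n : ℕ} (hn : n ≤ 1) :
    G.nonBacktrackingWalkMatrix α n = G.adjMatrix α ^ n := by
  ext u v
  rw [adjMatrix_pow_apply_eq_card_walk, card_set_walk_length_eq, nonBacktrackingWalkMatrix,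
    Matrix.of_apply, nonBacktrackingWalks, filter_true_of_mem fun p hp =>
      isNonBacktracking_of_length_le_one ((mem_finsetWalkLength_iff.mp hp).trans_le hn)]

lemma nonBacktrackingWalkMatrix_two {k : ℕ} (hreg : G.IsRegularOfDegree k) :
    G.nonBacktrackingWalkMatrix α 2 + k = G.adjMatrix α ^ 2 := by
  ext u v
  rw [Matrix.add_apply, Matrix.natCast_apply, nonBacktrackingWalkMatrix, Matrix.of_apply,
    nonBacktrackingWalks]
  rcases eq_or_ne u v with rfl | huv
  · rw [filter_false_of_mem fun p hp hnb =>
        (isNonBacktracking_iff_ne_of_length_eq_two (mem_finsetWalkLength_iff.mp hp)).mp hnb rfl,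
      card_empty, Nat.cast_zero, zero_add, if_pos rfl, pow_two, adjMatrix_mul_self_apply_self,
      hreg u]
  · rw [filter_true_of_mem fun p hp =>
        (isNonBacktracking_iff_ne_of_length_eq_two (mem_finsetWalkLength_iff.mp hp)).mpr huv.symm,
      if_neg huv, Nat.cast_zero, add_zero, adjMatrix_pow_apply_eq_card_walk,
      card_set_walk_length_eq]

lemma nonBacktrackingWalkMatrix_add_three {k : ℕ} (hreg : G.IsRegularOfDegree k) (n : ℕ) :
    G.nonBacktrackingWalkMatrix α (n + 3) + k • G.nonBacktrackingWalkMatrix α (n + 1) =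
      G.adjMatrix α * G.nonBacktrackingWalkMatrix α (n + 2) +
        G.nonBacktrackingWalkMatrix α (n + 1) := by
  ext u v
  simp only [Matrix.add_apply, Matrix.smul_apply, adjMatrix_mul_apply, nonBacktrackingWalkMatrix,
    Matrix.of_apply]
  rw [nsmul_eq_mul]
  exact_mod_cast congrArg (Nat.cast : ℕ → α) (card_nonBacktrackingWalks_add_three hreg n u v)

lemma trace_nonBacktrackingWalkMatrix_ne_zero_iff [CharZero α] (n : ℕ) :
    (G.nonBacktrackingWalkMatrix α n).trace ≠ 0 ↔
      ∃ u, ∃ p : G.Walk u u, p.length = n ∧ p.IsNonBacktracking := by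
  simp [Matrix.trace, nonBacktrackingWalkMatrix, ← Nat.cast_sum, sum_eq_zero_iff, card_eq_zero,
    ← nonempty_iff_ne_empty, Finset.Nonempty]

end Matrix

theorem aeval_adjMatrix_treeF [Fintype V] [DecidableEq V] [DecidableRel G.Adj] {k : ℕ}
    (hreg : G.IsRegularOfDegree k) :
    ∀ n, aeval (G.adjMatrix ℝ) (treeF k n) = G.nonBacktrackingWalkMatrix ℝ n
  | 0 => by rw [treeF, map_one, nonBacktrackingWalkMatrix_of_le_one ℝ zero_le_one, pow_zero]
  | 1 => by rw [treeF, aeval_X, nonBacktrackingWalkMatrix_of_le_one ℝ le_rfl, pow_one]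
  | 2 => by
    rw [treeF, map_sub, map_pow, aeval_X, aeval_C, ← nonBacktrackingWalkMatrix_two ℝ hreg,
      map_natCast, add_sub_cancel_right]
  | n + 3 => by
    have h := nonBacktrackingWalkMatrix_add_three ℝ hreg n
    rw [treeF, map_sub, map_mul, map_mul, aeval_X, aeval_C, aeval_adjMatrix_treeF hreg (n + 1),
      aeval_adjMatrix_treeF hreg (n + 2), ← Algebra.smul_def, sub_smul, one_smul,
      Nat.cast_smul_eq_nsmul]
    linear_combination (norm := abel) -h

end SimpleGraph

open SimpleGraph in
theorem treeF_trace_girth_general (V : Type) [Fintype V] [DecidableEq V]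
    (G : SimpleGraph V) [DecidableRel G.Adj] (k : ℕ)
    (hreg : G.IsRegularOfDegree k) (g : ℕ) (hg : 3 ≤ g) :
    G.girth = (g : ℕ∞) ↔
      ((∀ i, 1 ≤ i → i ≤ g - 1 →
          Matrix.trace (Polynomial.aeval (G.adjMatrix ℝ) (treeF (k : ℝ) i)) = 0) ∧
        Matrix.trace (Polynomial.aeval (G.adjMatrix ℝ) (treeF (k : ℝ) g)) ≠ 0) := by
  have hP : ∀ n, 1 ≤ n → (∃ u, ∃ p : G.Walk u u, p.length = n ∧ p.IsNonBacktracking) →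
      G.egirth ≤ n := by
    rintro n hn ⟨u, p, rfl, hp⟩
    exact hp.egirth_le_length (Walk.not_nil_iff_lt_length.mpr hn)
  simp only [aeval_adjMatrix_treeF hreg, ← not_ne_iff (b := (0 : ℝ)),
    trace_nonBacktrackingWalkMatrix_ne_zero_iff]
  rw [Nat.cast_inj, girth, ENat.toNat_eq_iff (by omega)]
  constructor
  · intro h
    obtain ⟨u, c, hc, hlen⟩ :=
      (exists_egirth_eq_length (G := G)).mpr (by simp [← egirth_eq_top, h])
    rw [h, Nat.cast_inj] at hlen
    refine ⟨fun i hi1 hi2 hi => ?_, u, c, hlen.symm, hc.isTrail.isNonBacktracking⟩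
    have := h ▸ hP i hi1 hi
    norm_cast at this
    omega
  · rintro ⟨hz, hPg⟩
    have hle := hP g (by omega) hPg
    obtain ⟨u, c, hc, hlen⟩ :=
      (exists_egirth_eq_length (G := G)).mpr fun hac => by simp [hac.egirth_eq_top] at hle
    rw [hlen] at hle ⊢
    norm_cast at hle ⊢
    by_contra hne
    exact hz c.length (by have := hc.three_le_length; omega) (by omega)
      ⟨u, c, rfl, hc.isTrail.isNonBacktracking⟩

theorem treeF_trace_girth (V : Type) [Fintype V] [DecidableEq V]
    (G : SimpleGraph V) [DecidableRel G.Adj] (k : ℕ) (hk : 2 ≤ k)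
    (hreg : G.IsRegularOfDegree k) (hconn : G.Connected) (g : ℕ) (hg : 3 ≤ g) :
    G.girth = (g : ℕ∞) ↔
      ((∀ i, 1 ≤ i → i ≤ g - 1 →
          Matrix.trace (Polynomial.aeval (G.adjMatrix ℝ) (treeF (k : ℝ) i)) = 0) ∧
        Matrix.trace (Polynomial.aeval (G.adjMatrix ℝ) (treeF (k : ℝ) g)) ≠ 0) :=
  treeF_trace_girth_general V G k hreg g hg
end

section
/- Linear programming bound: Let G be a connected k-regular simple graph with v vertices and distinct eigenvalues τ_0=k, τ_1, …, τ_d. Suppose f(x)=Σ_{i≥0} f_i·F_i^{(k)}(x) is a real polynomial with f(k)>0, f(τ_i)≤0 for all 1≤i≤d, f_0>0, and f_i≥0 for all i≥1. Then v ≤ f(k)/f_0. -/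
open Polynomial

/-!
Write `A` for the adjacency matrix and `F_i = treeF k i`. The entries of `F_i(A)` count
non-backtracking walks of length `i`: the recurrence of `F_i` is what one gets by extending such
walks by one step and discarding the `k - 1` (for `i = 1`: `k`) backtracking extensions. Hence
`tr F_i(A) ≥ 0` and `tr F_0(A) = v`, so `tr f(A) ≥ f_0 v`. On the other hand `tr f(A)` is the sum
of `f` over the eigenvalues of `A` with multiplicity; `f ≤ 0` at every eigenvalue other than `k`,
and `k` is simple because on a connected regular graph its eigenvectors are constant, so
`tr f(A) ≤ f(k)`.
-/

open Finset Matrix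

theorem Finset.sum_comp_le_of_card_filter_le_one {ι α M : Type*} [DecidableEq α]
    [AddCommMonoid M] [PartialOrder M] [IsOrderedAddMonoid M] {s : Finset ι} {φ : ι → α} {a : α}
    {g : α → M} (hcard : #{j ∈ s | φ j = a} ≤ 1) (ha : 0 ≤ g a)
    (hg : ∀ j ∈ s, φ j ≠ a → g (φ j) ≤ 0) : ∑ j ∈ s, g (φ j) ≤ g a := by
  rw [← sum_filter_add_sum_filter_not s (φ · = a)]
  calc ∑ j ∈ s with φ j = a, g (φ j) + ∑ j ∈ s with φ j ≠ a, g (φ j)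
      ≤ #{j ∈ s | φ j = a} • g a + 0 := by
        gcongr
        · exact (sum_congr rfl fun j hj => by rw [(mem_filter.mp hj).2]).trans_le (sum_const _).le
        · exact sum_nonpos fun j hj => hg j (mem_filter.mp hj).1 (mem_filter.mp hj).2
    _ ≤ g a := by simpa using nsmul_le_nsmul_left ha hcard

namespace Matrix.IsHermitian
variable {𝕜 n : Type*} [RCLike 𝕜] [Fintype n] [DecidableEq n] {A : Matrix n n 𝕜}

theorem trace_aeval (hA : A.IsHermitian) (p : ℝ[X]) :
    (aeval A p).trace = ∑ i, ((p.eval (hA.eigenvalues i) : ℝ) : 𝕜) := by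
  rw [← cfc_polynomial p A hA.isSelfAdjoint, hA.cfc_eq, IsHermitian.cfc,
    Unitary.conjStarAlgAut_apply, trace_mul_cycle, Unitary.coe_star_mul_self, one_mul,
    trace_diagonal]
  rfl

theorem card_filter_eigenvalues_eq_le_one (hA : A.IsHermitian) {μ : ℝ} (x : EuclideanSpace 𝕜 n)
    (hx : ∀ y : EuclideanSpace 𝕜 n, A *ᵥ y = (μ : 𝕜) • y → y ∈ Submodule.span 𝕜 {x}) :
    #{i | hA.eigenvalues i = μ} ≤ 1 := by
  set S : Finset n := {i | hA.eigenvalues i = μ}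
  let b : S → EuclideanSpace 𝕜 n := fun i => hA.eigenvectorBasis i
  have hb : LinearIndependent 𝕜 b :=
    (hA.eigenvectorBasis.orthonormal.comp _ Subtype.val_injective).linearIndependent
  have hspan : Submodule.span 𝕜 (Set.range b) ≤ Submodule.span 𝕜 {x} := by
    refine Submodule.span_le.mpr ?_
    rintro _ ⟨i, rfl⟩
    refine hx _ ((hA.mulVec_eigenvectorBasis i).trans ?_)
    rw [(mem_filter.mp i.2).2, RCLike.real_smul_eq_coe_smul (K := 𝕜)]
  calc #S = Module.finrank 𝕜 (Submodule.span 𝕜 (Set.range b)) := by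
        rw [finrank_span_eq_card hb, Fintype.card_coe]
    _ ≤ Module.finrank 𝕜 (Submodule.span 𝕜 {x}) := Submodule.finrank_mono hspan
    _ ≤ 1 := by simpa using finrank_span_le_card ({x} : Set (EuclideanSpace 𝕜 n))

end Matrix.IsHermitian

namespace SimpleGraph

variable {V : Type*} [Fintype V] [DecidableEq V] (G : SimpleGraph V) [DecidableRel G.Adj]

/-- The number of non-backtracking walks `x = x₀, x₁, …, xₙ = v` with `x₁ ≠ p`. -/
def nbWalkCountAvoiding : ℕ → V → V → V → ℕ
  | 0, _, x, v => if x = v then 1 else 0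
  | n + 1, p, x, v => ∑ y ∈ (G.neighborFinset x).erase p, nbWalkCountAvoiding n x y v

def nbWalkCount : ℕ → V → V → ℕ
  | 0, u, v => if u = v then 1 else 0
  | n + 1, u, v => ∑ x ∈ G.neighborFinset u, G.nbWalkCountAvoiding n u x v

theorem sum_neighborFinset_nbWalkCount (n : ℕ) (u v : V) :
    ∑ x ∈ G.neighborFinset u, G.nbWalkCount (n + 1) x v =
      G.nbWalkCount (n + 2) u v + ∑ x ∈ G.neighborFinset u, G.nbWalkCountAvoiding n x u v := by
  simp only [nbWalkCount, nbWalkCountAvoiding, ← sum_add_distrib]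
  refine sum_congr rfl fun x hx => (sum_erase_add _ _ ?_).symm
  simpa [adj_comm] using hx

noncomputable def nbMatrix (n : ℕ) : Matrix V V ℝ := of fun u v => (G.nbWalkCount n u v : ℝ)

theorem nbMatrix_zero : G.nbMatrix 0 = 1 := by
  ext u v
  simp [nbMatrix, nbWalkCount, one_apply]

theorem nbMatrix_one : G.nbMatrix 1 = G.adjMatrix ℝ := by
  ext u v
  simp [nbMatrix, nbWalkCount, nbWalkCountAvoiding, adjMatrix_apply]

theorem trace_nbMatrix_zero : (G.nbMatrix 0).trace = Fintype.card V := by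
  rw [nbMatrix_zero, trace_one]

theorem trace_nbMatrix_nonneg (n : ℕ) : 0 ≤ (G.nbMatrix n).trace :=
  sum_nonneg fun _ _ => Nat.cast_nonneg _

variable {G} {k : ℕ}

theorem IsRegularOfDegree.sum_neighborFinset_nbWalkCountAvoiding_zero
    (hreg : G.IsRegularOfDegree k) (u v : V) :
    ∑ x ∈ G.neighborFinset u, G.nbWalkCountAvoiding 0 x u v = k * if u = v then 1 else 0 := by
  simp [nbWalkCountAvoiding, hreg u]

theorem IsRegularOfDegree.sum_neighborFinset_nbWalkCountAvoiding_succ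
    (hreg : G.IsRegularOfDegree k) (n : ℕ) (u v : V) :
    ∑ x ∈ G.neighborFinset u, G.nbWalkCountAvoiding (n + 1) x u v + G.nbWalkCount (n + 1) u v =
      k * G.nbWalkCount (n + 1) u v :=
  calc _ = ∑ x ∈ G.neighborFinset u,
        (G.nbWalkCountAvoiding (n + 1) x u v + G.nbWalkCountAvoiding n u x v) := by
        rw [sum_add_distrib, nbWalkCount]
    _ = ∑ x ∈ G.neighborFinset u, G.nbWalkCount (n + 1) u v :=
        sum_congr rfl fun x hx => sum_erase_add _ _ hx
    _ = _ := by rw [sum_const, card_neighborFinset_eq_degree, hreg u, smul_eq_mul]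

theorem IsRegularOfDegree.adjMatrix_mul_nbMatrix_one (hreg : G.IsRegularOfDegree k) :
    G.adjMatrix ℝ * G.nbMatrix 1 = G.nbMatrix 2 + (k : ℝ) • 1 := by
  ext u v
  have := G.sum_neighborFinset_nbWalkCount 0 u v
  rw [hreg.sum_neighborFinset_nbWalkCountAvoiding_zero] at this
  rw [adjMatrix_mul_apply]
  simp only [nbMatrix, of_apply, Matrix.add_apply, Matrix.smul_apply, one_apply, smul_eq_mul]
  exact_mod_cast this

theorem IsRegularOfDegree.adjMatrix_mul_nbMatrix_succ_succ (hreg : G.IsRegularOfDegree k)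
    (n : ℕ) :
    G.adjMatrix ℝ * G.nbMatrix (n + 2) =
      G.nbMatrix (n + 3) + ((k : ℝ) - 1) • G.nbMatrix (n + 1) := by
  ext u v
  have hback : ∑ x ∈ G.neighborFinset u, (G.nbWalkCountAvoiding (n + 1) x u v : ℝ) =
      ((k : ℝ) - 1) * G.nbWalkCount (n + 1) u v := by
    rw [sub_one_mul, eq_sub_iff_add_eq]
    exact_mod_cast hreg.sum_neighborFinset_nbWalkCountAvoiding_succ n u v
  rw [adjMatrix_mul_apply]
  simp only [nbMatrix, of_apply, Matrix.add_apply, Matrix.smul_apply, smul_eq_mul, ← hback]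
  exact_mod_cast G.sum_neighborFinset_nbWalkCount (n + 1) u v

theorem IsRegularOfDegree.aeval_adjMatrix_treeF (hreg : G.IsRegularOfDegree k) :
    ∀ i, aeval (G.adjMatrix ℝ) (treeF k i) = G.nbMatrix i
  | 0 => by simp [treeF, nbMatrix_zero]
  | 1 => by simp [treeF, nbMatrix_one]
  | 2 => by
    rw [treeF, map_sub, map_pow, aeval_X, aeval_C, sq]
    nth_rewrite 2 [← nbMatrix_one G]
    rw [hreg.adjMatrix_mul_nbMatrix_one, Algebra.algebraMap_eq_smul_one, add_sub_cancel_right]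
  | n + 3 => by
    rw [treeF, map_sub, map_mul, map_mul, aeval_X, aeval_C, hreg.aeval_adjMatrix_treeF (n + 2),
      hreg.aeval_adjMatrix_treeF (n + 1), hreg.adjMatrix_mul_nbMatrix_succ_succ,
      ← Algebra.smul_def, add_sub_cancel_right]

theorem IsRegularOfDegree.mul_card_le_trace_aeval (hreg : G.IsRegularOfDegree k) {n : ℕ}
    {c : ℕ → ℝ} (hc : ∀ i, 0 ≤ c i) :
    c 0 * Fintype.card V ≤
      (aeval (G.adjMatrix ℝ) (∑ i ∈ range (n + 1), C (c i) * treeF k i)).trace := by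
  simp only [map_sum, map_mul, aeval_C, hreg.aeval_adjMatrix_treeF, ← Algebra.smul_def,
    trace_sum, trace_smul, smul_eq_mul]
  rw [← G.trace_nbMatrix_zero]
  exact single_le_sum (f := fun i => c i * (G.nbMatrix i).trace)
    (fun i _ => mul_nonneg (hc i) (G.trace_nbMatrix_nonneg i)) (mem_range.mpr n.succ_pos)

theorem IsRegularOfDegree.eq_of_adjMatrix_mulVec_eq_smul (hreg : G.IsRegularOfDegree k)
    (hconn : G.Connected) {x : V → ℝ} (hx : G.adjMatrix ℝ *ᵥ x = (k : ℝ) • x) (u w : V) :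
    x u = x w := by
  refine G.lapMatrix_mulVec_eq_zero_iff_forall_reachable.mp ?_ u w (hconn u w)
  ext v
  rw [lapMatrix, sub_mulVec, Pi.sub_apply, degMatrix_mulVec_apply, hx, hreg v, Pi.smul_apply,
    smul_eq_mul, Pi.zero_apply, sub_self]

theorem IsRegularOfDegree.card_filter_eigenvalues_eq_degree_le_one (hreg : G.IsRegularOfDegree k)
    (hconn : G.Connected) :
    #{i | (G.isHermitian_adjMatrix (R := ℝ)).eigenvalues i = k} ≤ 1 := by
  have : Nonempty V := hconn.nonempty
  let u₀ := Classical.arbitrary V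
  refine (G.isHermitian_adjMatrix (R := ℝ)).card_filter_eigenvalues_eq_le_one
    (WithLp.toLp 2 fun _ => 1) fun y hy => Submodule.mem_span_singleton.mpr ⟨y u₀, ?_⟩
  ext w
  simp [hreg.eq_of_adjMatrix_mulVec_eq_smul hconn hy u₀ w]

end SimpleGraph

theorem lp_bound_general (V : Type) [Fintype V] [DecidableEq V]
    (G : SimpleGraph V) [DecidableRel G.Adj] (k : ℕ)
    (hreg : G.IsRegularOfDegree k) (hconn : G.Connected)
    (d : ℕ) (τ : Fin (d + 1) → ℝ) (hτ0 : τ 0 = k)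
    (hspec : spectrum ℝ (G.adjMatrix ℝ) = Set.range τ)
    (n : ℕ) (c : ℕ → ℝ) (f : Polynomial ℝ)
    (hf : f = ∑ i ∈ Finset.range (n + 1), C (c i) * treeF (k : ℝ) i)
    (hfk : 0 < f.eval (k : ℝ)) (hfτ : ∀ i : Fin (d + 1), i ≠ 0 → f.eval (τ i) ≤ 0)
    (hc0 : 0 < c 0) (hci : ∀ i, 1 ≤ i → 0 ≤ c i) :
    (Fintype.card V : ℝ) ≤ f.eval (k : ℝ) / c 0 := by
  have hA := G.isHermitian_adjMatrix (R := ℝ)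
  have hc : ∀ i, 0 ≤ c i := fun i => i.eq_zero_or_pos.elim (fun h => h ▸ hc0.le) (hci i)
  have hf_nonpos : ∀ j, hA.eigenvalues j ≠ k → f.eval (hA.eigenvalues j) ≤ 0 := by
    intro j hj
    obtain ⟨i, hi⟩ : hA.eigenvalues j ∈ Set.range τ := hspec ▸ hA.eigenvalues_mem_spectrum_real j
    rw [← hi] at hj ⊢
    exact hfτ i (by rintro rfl; exact hj hτ0)
  rw [le_div_iff₀ hc0, mul_comm]
  calc c 0 * Fintype.card V ≤ (aeval (G.adjMatrix ℝ) f).trace :=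
        hf ▸ hreg.mul_card_le_trace_aeval hc
    _ = ∑ j, f.eval (hA.eigenvalues j) := hA.trace_aeval f
    _ ≤ f.eval (k : ℝ) := sum_comp_le_of_card_filter_le_one (g := f.eval)
        (hreg.card_filter_eigenvalues_eq_degree_le_one hconn) hfk.le fun j _ => hf_nonpos j

theorem lp_bound (V : Type) [Fintype V] [DecidableEq V]
    (G : SimpleGraph V) [DecidableRel G.Adj] (k : ℕ) (hk : 2 ≤ k)
    (hreg : G.IsRegularOfDegree k) (hconn : G.Connected)
    (d : ℕ) (τ : Fin (d + 1) → ℝ) (hτ0 : τ 0 = k) (hτinj : Function.Injective τ)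
    (hspec : spectrum ℝ (G.adjMatrix ℝ) = Set.range τ)
    (n : ℕ) (c : ℕ → ℝ) (f : Polynomial ℝ)
    (hf : f = ∑ i ∈ Finset.range (n + 1), C (c i) * treeF (k : ℝ) i)
    (hfk : 0 < f.eval (k : ℝ)) (hfτ : ∀ i : Fin (d + 1), i ≠ 0 → f.eval (τ i) ≤ 0)
    (hc0 : 0 < c 0) (hci : ∀ i, 1 ≤ i → 0 ≤ c i) :
    (Fintype.card V : ℝ) ≤ f.eval (k : ℝ) / c 0 :=
  lp_bound_general V G k hreg hconn d τ hτ0 hspec n c f hf hfk hfτ hc0 hci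
end

section
/- Let p_0, p_1, … be monic orthogonal polynomials with deg(p_i)=i (with respect to some positive weight on an interval). For any α ∈ ℝ, the polynomial p_n + α·p_{n-1} has n distinct real roots r_1 < … < r_n. -/
/-!
Let `q = p (n + 1) + α p n` and let `h = ∏ (X - t)` over the real roots `t` of `q` of odd
multiplicity. Every root of `q * h` has even multiplicity, so `q * h ≥ 0` on `ℝ`, and
`∫ q h dμ > 0`. Since `q` is orthogonal to all polynomials of degree `< n`, this forces
`deg h ≥ n`. The quotient `q / h` has only even-multiplicity real roots and degree `≤ 1`,
so it is constant; hence `q = h` has `n + 1` simple real roots.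
-/

open Polynomial MeasureTheory Filter

namespace Finset

theorem exists_strictMono_prod_eq {α M : Type*} [LinearOrder α] [CommMonoid M] (s : Finset α)
    {k : ℕ} (hs : s.card = k) (f : α → M) :
    ∃ r : Fin k → α, StrictMono r ∧ ∏ t ∈ s, f t = ∏ i, f (r i) :=
  ⟨s.orderEmbOfFin hs, (s.orderEmbOfFin hs).strictMono, by
    rw [← prod_image fun _ _ _ _ h => (s.orderEmbOfFin hs).injective h,
      s.image_orderEmbOfFin_univ hs]⟩

end Finset

namespace Polynomial

theorem natDegree_finset_prod_X_sub_C {R : Type*} [CommRing R] [Nontrivial R] (s : Finset R) :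
    (∏ t ∈ s, (X - C t)).natDegree = s.card := by
  rw [Finset.prod_eq_multiset_prod, natDegree_multiset_prod_X_sub_C_eq_card]
  rfl

variable {K : Type*} [CommRing K] [IsDomain K]

theorem Monic.eq_one_of_natDegree_le_one_of_even_rootMultiplicity {w : K[X]} (hw : w.Monic)
    (hdeg : w.natDegree ≤ 1) (heven : ∀ x, Even (w.rootMultiplicity x)) : w = 1 := by
  rcases Nat.le_one_iff_eq_zero_or_eq_one.mp hdeg with h0 | h1
  · exact hw.natDegree_eq_zero.mp h0
  · set a := -w.coeff 0
    have hroot := heven a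
    rw [hw.eq_X_add_C h1, ← sub_neg_eq_add, ← map_neg, rootMultiplicity_X_sub_C_self] at hroot
    exact absurd hroot Nat.not_even_one

theorem exists_eq_sq_mul_of_even_rootMultiplicity {w : K[X]} (hw0 : w ≠ 0)
    (heven : ∀ x, Even (w.rootMultiplicity x)) {a : K} (ha : w.IsRoot a) :
    ∃ u, w = (X - C a) ^ 2 * u ∧ ∀ x, Even (u.rootMultiplicity x) := by
  obtain ⟨u, rfl⟩ : (X - C a) ^ 2 ∣ w := by
    obtain ⟨m, hm⟩ := heven a
    have := (rootMultiplicity_pos hw0).mpr ha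
    exact (le_rootMultiplicity_iff hw0).mp (by omega)
  refine ⟨u, rfl, fun x => ?_⟩
  have hsq : ((X - C a) ^ 2).rootMultiplicity x = 2 * (X - C a).rootMultiplicity x := by
    rw [sq, rootMultiplicity_mul (mul_ne_zero (X_sub_C_ne_zero a) (X_sub_C_ne_zero a))]
    ring
  have hw_even := heven x
  rw [rootMultiplicity_mul hw0, hsq] at hw_even
  exact (Nat.even_add.mp hw_even).mp (even_two_mul _)

variable [DecidableEq K]

noncomputable def oddRoots (q : K[X]) : Finset K :=
  q.roots.toFinset.filter fun x => Odd (q.rootMultiplicity x)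

theorem mem_oddRoots {q : K[X]} {x : K} : x ∈ q.oddRoots ↔ Odd (q.rootMultiplicity x) := by
  rw [oddRoots, Finset.mem_filter, Multiset.mem_toFinset, and_iff_right_iff_imp]
  intro hodd
  rw [← count_roots] at hodd
  exact Multiset.count_pos.mp hodd.pos

theorem rootMultiplicity_prod_X_sub_C (s : Finset K) (x : K) :
    (∏ t ∈ s, (X - C t)).rootMultiplicity x = if x ∈ s then 1 else 0 := by
  rw [← count_roots, roots_prod_X_sub_C, Multiset.count_eq_of_nodup s.nodup]
  rfl

theorem exists_eq_prod_oddRoots_mul {q : K[X]} (hq : q ≠ 0) :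
    ∃ w, q = (∏ t ∈ q.oddRoots, (X - C t)) * w ∧ ∀ x, Even (w.rootMultiplicity x) := by
  obtain ⟨w, hw⟩ : ∏ t ∈ q.oddRoots, (X - C t) ∣ q := by
    refine (Multiset.prod_X_sub_C_dvd_iff_le_roots hq _).mpr
      ((Multiset.le_iff_subset q.oddRoots.nodup).mpr fun x hx => ?_)
    exact Multiset.mem_toFinset.mp (Finset.mem_filter.mp hx).1
  refine ⟨w, hw, fun x => ?_⟩
  have hmult := congrArg (rootMultiplicity x) hw
  rw [rootMultiplicity_mul (hw ▸ hq), rootMultiplicity_prod_X_sub_C] at hmult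
  by_cases hx : x ∈ q.oddRoots
  · rw [if_pos hx] at hmult
    obtain ⟨m, hm⟩ := mem_oddRoots.mp hx
    exact ⟨m, by omega⟩
  · rw [if_neg hx, zero_add] at hmult
    rw [← hmult, ← Nat.not_odd_iff_even]
    exact mt mem_oddRoots.mpr hx

theorem eval_nonneg_of_even_rootMultiplicity {w : ℝ[X]} (hlc : 0 ≤ w.leadingCoeff)
    (heven : ∀ x, Even (w.rootMultiplicity x)) (x : ℝ) : 0 ≤ w.eval x := by
  induction hd : w.natDegree using Nat.strong_induction_on generalizing w with
  | _ d ih =>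
  rcases eq_or_ne w 0 with rfl | hw0
  · simp
  by_cases hroot : ∃ a, w.IsRoot a
  · obtain ⟨a, ha⟩ := hroot
    obtain ⟨u, rfl, hu_even⟩ := exists_eq_sq_mul_of_even_rootMultiplicity hw0 heven ha
    have hmonic : ((X - C a) ^ 2).Monic := (monic_X_sub_C a).pow 2
    have hu_deg : u.natDegree < d := by
      rw [← hd, hmonic.natDegree_mul' (right_ne_zero_of_mul hw0), natDegree_pow,
        natDegree_X_sub_C]
      omega
    have hu_nonneg := ih _ hu_deg (by rwa [leadingCoeff_monic_mul hmonic] at hlc) hu_even rfl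
    rw [eval_mul, eval_pow]
    exact mul_nonneg (sq_nonneg _) hu_nonneg
  -- without real roots, `w` keeps the sign it has near `+∞`
  · push Not at hroot
    rcases Nat.eq_zero_or_pos d with rfl | hd_pos
    · rw [eq_C_of_natDegree_eq_zero hd, eval_C]
      rwa [leadingCoeff, hd] at hlc
    have htop : Tendsto w.eval atTop atTop :=
      tendsto_atTop_of_leadingCoeff_nonneg w (natDegree_pos_iff_degree_pos.mp (hd ▸ hd_pos)) hlc
    obtain ⟨b, hb_pos, hxb⟩ := ((htop.eventually_ge_atTop 0).and (eventually_ge_atTop x)).exists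
    by_contra! hneg
    obtain ⟨c, -, hc⟩ := intermediate_value_Icc hxb w.continuous.continuousOn
      ⟨hneg.le, hb_pos⟩
    exact hroot c hc

theorem eval_mul_prod_oddRoots_nonneg {q : ℝ[X]} (hq : 0 ≤ q.leadingCoeff) (x : ℝ) :
    0 ≤ (q * ∏ t ∈ q.oddRoots, (X - C t)).eval x := by
  rcases eq_or_ne q 0 with rfl | hq0
  · simp
  obtain ⟨w, hqw, hw_even⟩ := exists_eq_prod_oddRoots_mul hq0
  set h := ∏ t ∈ q.oddRoots, (X - C t)
  have hw_lc : 0 ≤ w.leadingCoeff := by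
    rwa [hqw, leadingCoeff_monic_mul (monic_prod_X_sub_C _ _)] at hq
  have hsq : (q * h).eval x = h.eval x ^ 2 * w.eval x := by
    rw [hqw]; simp only [eval_mul]; ring
  rw [hsq]
  exact mul_nonneg (sq_nonneg _) (eval_nonneg_of_even_rootMultiplicity hw_lc hw_even x)

end Polynomial

section PolynomialIntegral

variable {μ : Measure ℝ} (hint : ∀ q : ℝ[X], Integrable (fun x => q.eval x) μ)

noncomputable def polynomialIntegral : ℝ[X] →ₗ[ℝ] ℝ where
  toFun q := ∫ x, q.eval x ∂μ
  map_add' f g := by simp only [eval_add]; exact integral_add (hint f) (hint g)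
  map_smul' c f := by simp only [eval_smul, smul_eq_mul, integral_const_mul, RingHom.id_apply]

theorem polynomialIntegral_apply (q : ℝ[X]) :
    polynomialIntegral hint q = ∫ x, q.eval x ∂μ := rfl

theorem polynomialIntegral_pos (hpos : ∀ q : ℝ[X], q ≠ 0 → 0 < ∫ x, (q.eval x) ^ 2 ∂μ)
    {f : ℝ[X]} (hf : f ≠ 0) (hf_nonneg : ∀ x, 0 ≤ f.eval x) : 0 < polynomialIntegral hint f := by
  refine (integral_nonneg hf_nonneg).lt_of_ne fun hzero => (hpos f hf).ne' ?_
  have hae : (fun x => f.eval x) =ᵐ[μ] 0 :=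
    (integral_eq_zero_iff_of_nonneg hf_nonneg (hint f)).mp hzero.symm
  exact integral_eq_zero_of_ae (hae.mono fun x hx => by simp [hx])

theorem polynomialIntegral_mul_eq_zero_of_degree_lt {p : ℕ → ℝ[X]} (hmonic : ∀ i, (p i).Monic)
    (hdeg : ∀ i, (p i).natDegree = i)
    (horth : ∀ i j, i ≠ j → ∫ x, (p i).eval x * (p j).eval x ∂μ = 0) {i : ℕ} {h : ℝ[X]}
    (hh : h.degree < i) : polynomialIntegral hint (p i * h) = 0 := by
  let S : Sequence ℝ := ⟨p, fun i => by rw [degree_eq_natDegree (hmonic i).ne_zero, hdeg]⟩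
  have hspan : degreeLT ℝ i ≤
      LinearMap.ker ((polynomialIntegral hint).comp (LinearMap.mulLeft ℝ (p i))) := by
    rw [← S.span_degreeLT fun j _ => by simp [S, (hmonic j).leadingCoeff], Submodule.span_le]
    rintro _ ⟨j, hj, rfl⟩
    simpa [polynomialIntegral_apply] using horth i j (Set.mem_Iio.mp hj).ne'
  exact hspan (mem_degreeLT.mpr hh)

theorem le_card_oddRoots_of_polynomialIntegral_mul_eq_zero
    (hpos : ∀ q : ℝ[X], q ≠ 0 → 0 < ∫ x, (q.eval x) ^ 2 ∂μ) {q : ℝ[X]} (hq : 0 < q.leadingCoeff)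
    {n : ℕ} (horth : ∀ h : ℝ[X], h.degree < n → polynomialIntegral hint (q * h) = 0) :
    n ≤ q.oddRoots.card := by
  by_contra! hlt
  have hh_monic : (∏ t ∈ q.oddRoots, (X - C t)).Monic := monic_prod_X_sub_C _ _
  have hh_deg : (∏ t ∈ q.oddRoots, (X - C t)).degree < (n : WithBot ℕ) := by
    rw [degree_eq_natDegree hh_monic.ne_zero, natDegree_finset_prod_X_sub_C]
    exact_mod_cast hlt
  have hqh_pos := polynomialIntegral_pos hint hpos
    (mul_ne_zero (leadingCoeff_ne_zero.mp hq.ne') hh_monic.ne_zero)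
    (eval_mul_prod_oddRoots_nonneg hq.le)
  exact (horth _ hh_deg).not_gt hqh_pos

end PolynomialIntegral

theorem quasi_orthogonal_real_distinct_roots (μ : Measure ℝ) (p : ℕ → Polynomial ℝ)
    (hmonic : ∀ i, (p i).Monic) (hdeg : ∀ i, (p i).natDegree = i)
    (hint : ∀ q : Polynomial ℝ, Integrable (fun x => q.eval x) μ)
    (hpos : ∀ q : Polynomial ℝ, q ≠ 0 → 0 < ∫ x, (q.eval x) ^ 2 ∂μ)
    (horth : ∀ i j, i ≠ j → ∫ x, (p i).eval x * (p j).eval x ∂μ = 0)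
    (n : ℕ) (α : ℝ) :
    ∃ r : Fin (n + 1) → ℝ, StrictMono r ∧
      p (n + 1) + C α * p n = ∏ i, (X - C (r i)) := by
  set q := p (n + 1) + C α * p n
  have hlower : (C α * p n).degree < (p (n + 1)).degree :=
    degree_lt_degree ((natDegree_C_mul_le α _).trans_lt (by simp [hdeg]))
  have hq_monic : q.Monic := (hmonic _).add_of_left hlower
  have hq_deg : q.natDegree = n + 1 := by rw [natDegree_add_eq_left_of_degree_lt hlower, hdeg]
  have hq_orth : ∀ h : ℝ[X], h.degree < n → polynomialIntegral hint (q * h) = 0 := fun h hh => by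
    rw [add_mul, mul_assoc, C_mul', map_add, map_smul,
      polynomialIntegral_mul_eq_zero_of_degree_lt hint hmonic hdeg horth hh,
      polynomialIntegral_mul_eq_zero_of_degree_lt hint hmonic hdeg horth
        (hh.trans (WithBot.coe_lt_coe.mpr n.lt_succ_self)), smul_zero, add_zero]
  have hT := le_card_oddRoots_of_polynomialIntegral_mul_eq_zero hint hpos
    (hq_monic.leadingCoeff ▸ zero_lt_one) hq_orth
  obtain ⟨w, hqw, hw_even⟩ := exists_eq_prod_oddRoots_mul hq_monic.ne_zero
  set T := q.oddRoots
  have hh_monic : (∏ t ∈ T, (X - C t)).Monic := monic_prod_X_sub_C _ _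
  have hw_monic : w.Monic := hh_monic.of_mul_monic_left (hqw ▸ hq_monic)
  have hdeg_sum : T.card + w.natDegree = n + 1 := by
    rw [← hq_deg, hqw, hh_monic.natDegree_mul' hw_monic.ne_zero, natDegree_finset_prod_X_sub_C]
  have hw_one : w = 1 :=
    hw_monic.eq_one_of_natDegree_le_one_of_even_rootMultiplicity (by omega) hw_even
  rw [hw_one, natDegree_one, add_zero] at hdeg_sum
  obtain ⟨r, hr, hprod⟩ := T.exists_strictMono_prod_eq hdeg_sum fun t => X - C t
  exact ⟨r, hr, by rw [hqw, hw_one, mul_one, hprod]⟩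
end

section
/- Hoffman polynomial identity: if G is a connected k-regular simple graph on v vertices with distinct eigenvalues τ_0=k, τ_1,…,τ_d, then (v/∏_{i=1}^d (k-τ_i))·∏_{i=1}^d (A - τ_i·I) = J, where J is the all-ones matrix. -/
/-!
A real symmetric matrix is annihilated by any polynomial vanishing on its spectrum (functional
calculus), so `A` is annihilated by `∏ᵢ (X - τᵢ)` and every column of `B = ∏_{i ≥ 1} (A - τᵢ)` is
a `k`-eigenvector of `A`. For a connected `k`-regular graph such eigenvectors lie in the kernel of
the Laplacian `k I - A`, hence are constant. As `B` is symmetric it is therefore a constant matrix,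
and since `A 𝟙 = k 𝟙` its row sums are `∏_{i ≥ 1} (k - τᵢ) ≠ 0`, which fixes the constant.
-/

open Polynomial Matrix

section FunctionalCalculus

variable {R A : Type*} {p : A → Prop} [CommRing R] [StarRing R] [MetricSpace R]
  [IsTopologicalSemiring R] [ContinuousStar R] [TopologicalSpace A] [Ring A] [StarRing A]
  [Algebra R A] [ContinuousFunctionalCalculus R A p]

theorem aeval_prod_X_sub_C_eq_zero {ι : Type*} {a : A} (ha : p a) (s : Finset ι) (τ : ι → R)
    (hspec : spectrum R a ⊆ τ '' s) : aeval a (∏ i ∈ s, (X - C (τ i))) = 0 := by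
  have hvanish : Set.EqOn (∏ i ∈ s, (X - C (τ i))).eval 0 (spectrum R a) := fun x hx => by
    obtain ⟨j, hj, rfl⟩ := hspec hx
    simpa [eval_prod] using Finset.prod_eq_zero hj (by simp)
  rw [← cfc_polynomial _ a, cfc_congr hvanish, cfc_zero]

theorem cfc_predicate_aeval {a : A} (ha : p a) (q : R[X]) : p (aeval a q) :=
  cfc_polynomial q a ▸ cfc_predicate _ a

end FunctionalCalculus

theorem mul_aeval_prod_erase_eq_smul {R A ι : Type*} [CommRing R] [Ring A] [Algebra R A]
    [DecidableEq ι] {a : A} {s : Finset ι} {τ : ι → R}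
    (h : aeval a (∏ i ∈ s, (X - C (τ i))) = 0) {i₀ : ι} (hi₀ : i₀ ∈ s) :
    a * aeval a (∏ i ∈ s.erase i₀, (X - C (τ i))) =
      τ i₀ • aeval a (∏ i ∈ s.erase i₀, (X - C (τ i))) := by
  rwa [← Finset.mul_prod_erase _ _ hi₀, map_mul, map_sub, aeval_X, aeval_C, sub_mul, sub_eq_zero,
    Algebra.algebraMap_eq_smul_one, smul_one_mul] at h

theorem Matrix.aeval_mulVec_of_mulVec_eq_smul {n R : Type*} [Fintype n] [DecidableEq n]
    [CommRing R] {A : Matrix n n R} {x : n → R} {μ : R} (hx : A *ᵥ x = μ • x) (q : R[X]) :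
    aeval A q *ᵥ x = q.eval μ • x := by
  induction q using Polynomial.induction_on with
  | C a => simp [Algebra.algebraMap_eq_smul_one, smul_mulVec]
  | add p q hp hq => simp [add_mulVec, hp, hq, add_smul]
  | monomial m a ih =>
    rw [pow_succ, ← mul_assoc, map_mul, aeval_X, ← mulVec_mulVec, hx, mulVec_smul, ih, smul_smul]
    congr 1
    simp only [eval_mul, eval_C, eval_pow, eval_X]
    ring

namespace SimpleGraph

variable {V : Type*} [Fintype V] {G : SimpleGraph V} [DecidableRel G.Adj] {k : ℕ}

theorem IsRegularOfDegree.lapMatrix_eq [DecidableEq V] {R : Type*} [Ring R]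
    (hreg : G.IsRegularOfDegree k) :
    G.lapMatrix R = (k : R) • 1 - G.adjMatrix R := by
  rw [lapMatrix, degMatrix, smul_one_eq_diagonal]
  simp only [hreg _]

theorem IsRegularOfDegree.adjMatrix_mulVec_one {R : Type*} [NonAssocSemiring R]
    (hreg : G.IsRegularOfDegree k) : G.adjMatrix R *ᵥ (fun _ => 1) = (k : R) • fun _ => 1 := by
  ext v
  simp [hreg v]

theorem Connected.apply_eq_of_adjMatrix_mulVec_eq_smul (hconn : G.Connected)
    (hreg : G.IsRegularOfDegree k) {x : V → ℝ} (hx : G.adjMatrix ℝ *ᵥ x = (k : ℝ) • x)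
    (u v : V) : x u = x v := by
  classical
  have hlap : G.lapMatrix ℝ *ᵥ x = 0 := by
    rw [hreg.lapMatrix_eq, sub_mulVec, smul_mulVec, one_mulVec, hx, sub_self]
  exact lapMatrix_mulVec_eq_zero_iff_forall_reachable G |>.mp hlap u v (hconn u v)

theorem Connected.apply_eq_of_adjMatrix_mul_eq_smul (hconn : G.Connected)
    (hreg : G.IsRegularOfDegree k) {B : Matrix V V ℝ} (hB : B.IsSymm)
    (hAB : G.adjMatrix ℝ * B = (k : ℝ) • B) (i j i' j' : V) : B i j = B i' j' := by
  have hcol (j i i' : V) : B i j = B i' j := by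
    refine hconn.apply_eq_of_adjMatrix_mulVec_eq_smul hreg (x := fun l => B l j) ?_ i i'
    ext l
    simpa [mulVec, dotProduct, Matrix.mul_apply] using congrFun (congrFun hAB l) j
  calc B i j = B j' j := hcol j i j'
    _ = B j j' := hB.apply j j'
    _ = B i' j' := hcol j' j i'

theorem Connected.card_smul_eq_of_adjMatrix_mul_eq_smul (hconn : G.Connected)
    (hreg : G.IsRegularOfDegree k) {B : Matrix V V ℝ} (hB : B.IsSymm)
    (hAB : G.adjMatrix ℝ * B = (k : ℝ) • B) {c : ℝ} (hrow : B *ᵥ (fun _ => 1) = c • fun _ => 1) :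
    (Fintype.card V : ℝ) • B = of fun _ _ => c := by
  ext i j
  have hrow_i := congrFun hrow i
  simp only [mulVec, dotProduct, mul_one, Pi.smul_apply, smul_eq_mul] at hrow_i
  rw [Finset.sum_congr rfl fun l _ => hconn.apply_eq_of_adjMatrix_mul_eq_smul hreg hB hAB i l i j,
    Finset.sum_const, Finset.card_univ, nsmul_eq_mul] at hrow_i
  simpa using hrow_i

end SimpleGraph

theorem hoffman_polynomial_general (V : Type) [Fintype V] [DecidableEq V]
    (G : SimpleGraph V) [DecidableRel G.Adj] (k : ℕ)
    (hreg : G.IsRegularOfDegree k) (hconn : G.Connected)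
    (d : ℕ) (τ : Fin (d + 1) → ℝ) (hτ0 : τ 0 = k) (hτinj : Function.Injective τ)
    (hspec : spectrum ℝ (G.adjMatrix ℝ) = Set.range τ) :
    Polynomial.aeval (G.adjMatrix ℝ)
        (C ((Fintype.card V : ℝ) / ∏ i ∈ Finset.univ.erase 0, ((k : ℝ) - τ i)) *
          ∏ i ∈ Finset.univ.erase 0, (X - C (τ i))) =
      Matrix.of (fun _ _ => (1 : ℝ)) := by
  set A := G.adjMatrix ℝ
  set p := ∏ i ∈ Finset.univ.erase 0, (X - C (τ i))
  have hA : IsSelfAdjoint A := G.isHermitian_adjMatrix ℝ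
  have hann := aeval_prod_X_sub_C_eq_zero hA Finset.univ τ (by simp [hspec])
  have hAB : A * aeval A p = (k : ℝ) • aeval A p :=
    hτ0 ▸ mul_aeval_prod_erase_eq_smul hann (Finset.mem_univ 0)
  have hB : (aeval A p).IsSymm := by
    have h := cfc_predicate_aeval hA p
    rwa [IsSelfAdjoint, star_eq_conjTranspose, conjTranspose_eq_transpose_of_trivial] at h
  have hJ := hconn.card_smul_eq_of_adjMatrix_mul_eq_smul hreg hB hAB
    (aeval_mulVec_of_mulVec_eq_smul hreg.adjMatrix_mulVec_one p)
  have hpk : p.eval (k : ℝ) = ∏ i ∈ Finset.univ.erase 0, ((k : ℝ) - τ i) := by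
    simp [p, eval_prod]
  have hpk_ne : p.eval (k : ℝ) ≠ 0 := by
    rw [hpk, Finset.prod_ne_zero_iff]
    intro i hi
    rw [sub_ne_zero, ← hτ0]
    exact hτinj.ne (Finset.ne_of_mem_erase hi).symm
  rw [map_mul, aeval_C, Algebra.algebraMap_eq_smul_one, smul_one_mul, ← hpk, div_eq_inv_mul,
    mul_smul, hJ]
  ext i j
  simp [hpk_ne]

theorem hoffman_polynomial (V : Type) [Fintype V] [DecidableEq V]
    (G : SimpleGraph V) [DecidableRel G.Adj] (k : ℕ) (hk : 2 ≤ k)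
    (hreg : G.IsRegularOfDegree k) (hconn : G.Connected)
    (d : ℕ) (τ : Fin (d + 1) → ℝ) (hτ0 : τ 0 = k) (hτinj : Function.Injective τ)
    (hspec : spectrum ℝ (G.adjMatrix ℝ) = Set.range τ) :
    Polynomial.aeval (G.adjMatrix ℝ)
        (C ((Fintype.card V : ℝ) / ∏ i ∈ Finset.univ.erase 0, ((k : ℝ) - τ i)) *
          ∏ i ∈ Finset.univ.erase 0, (X - C (τ i))) =
      Matrix.of (fun _ _ => (1 : ℝ)) :=
  hoffman_polynomial_general V G k hreg hconn d τ hτ0 hτinj hspec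
end
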